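/- arXiv:2501.08602 — 6 statements merged into one kernel-verified Lean document; each statement's English description precedes it below -/
import Mathlib

section
/- Let k ≥ 0 and 0 ≤ i ≤ 2k+1 be integers and set s = k(k+1) + i. For every odd integer n with n > N_s^odd, the number of representations of g((n+1)/2, (n+3)/2; x_s^odd) + y_s^odd·t_n by the three numbers t_n, (n+1)/2, (n+3)/2 equals s, i.e. d(g((n+1)/2, (n+3)/2; x_s^odd) + y_s^odd·t_n ; t_n, (n+1)/2, (n+3)/2) = s. (Here (n+1)/2 = t_{n+1}/d_1 and (n+3)/2 = t_{n+2}/d_1 where d_1 = gcd(t_{n+1}, t_{n+2}) = n+2 for odd n.) -/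
open Finset

/-- Number of representations of `m` as `∑ i, a i * x i` with nonnegative integers `x i`
(for positive weights `a i`, every solution satisfies `x i ≤ m`). -/
def repCount {k : ℕ} (a : Fin k → ℕ) (m : ℕ) : ℕ :=
  (Finset.univ.filter (fun x : Fin k → Fin (m + 1) => ∑ i, a i * (x i : ℕ) = m)).card

/-- Representation count extended to the integers (no representations of negative numbers). -/
def repCountZ {k : ℕ} (a : Fin k → ℕ) (m : ℤ) : ℕ :=
  if 0 ≤ m then repCount a m.toNat else 0

/-- The generalized Frobenius number `g(a; s)`: the largest integer having at most `s`
representations by the tuple `a`. -/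
noncomputable def genFrob {k : ℕ} (a : Fin k → ℕ) (s : ℕ) : ℤ :=
  sSup {m : ℤ | repCountZ a m ≤ s}

/-- The `n`-th triangular number `t n = n(n+1)/2`. -/
def t (n : ℕ) : ℕ := n * (n + 1) / 2

/-- `N_s^even = 6⌊√(s+1)⌋ - 6`. -/
def NEven (s : ℕ) : ℤ := 6 * (Nat.sqrt (s + 1) : ℤ) - 6

/-- `N_s^odd = 6⌊(√(4s+5) - 1)/2⌋ - 3`. -/
def NOdd (s : ℕ) : ℤ := 6 * (((Nat.sqrt (4 * s + 5) - 1) / 2 : ℕ) : ℤ) - 3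

/-- `δ_s = 1` if `s ≥ ⌊√s⌋² + ⌊√s⌋`, and `0` otherwise. -/
def deltaS (s : ℕ) : ℤ := if Nat.sqrt s ^ 2 + Nat.sqrt s ≤ s then 1 else 0

/-- `q_s = 2⌊√s⌋ + 2 + δ_s`. -/
def qS (s : ℕ) : ℤ := 2 * (Nat.sqrt s : ℤ) + 2 + deltaS s

/-- `c_s = s - ⌊√s⌋² - δ_s⌊√s⌋`. -/
def cS (s : ℕ) : ℤ := (s : ℤ) - (Nat.sqrt s : ℤ) ^ 2 - deltaS s * (Nat.sqrt s : ℤ)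

/-- For `s = k(k+1) + i` with `0 ≤ i ≤ 2k+1`: `x_s^even`. -/
def xEvenN (k i : ℕ) : ℕ := if i ≤ k then i else i - k - 1

/-- For `s = k(k+1) + i` with `0 ≤ i ≤ 2k+1`: `y_s^even`. -/
def yEvenN (k i : ℕ) : ℕ := if i ≤ k then 2 * (k - i) else 4 * k + 3 - 2 * i

/-- For `s = k(k+1) + i` with `0 ≤ i ≤ 2k+1`: `x_s^odd`. -/
def xOddN (k i : ℕ) : ℕ := if i ≤ k then 2 * i else 2 * (i - k) - 1

/-- For `s = k(k+1) + i` with `0 ≤ i ≤ 2k+1`: `y_s^odd`. -/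
def yOddN (k i : ℕ) : ℕ := if i ≤ k then k - i else 2 * k + 1 - i

/-!
Write `n = 2a - 1`, so that the generators are `t_n = a n`, `a` and `a + 1`. Every solution of
`a x₀ + (a + 1) x₁ = a q + r` with `r < a` has `x₁ ≡ r (mod a)`, whence
`d(a q + r; a, a + 1) = ⌊(q + a + 1 - r) / (a + 1)⌋` and
`g(a, a + 1; x) = (x + 1) a (a + 1) - 2a - 1`.
Sorting the representations of `M = g(a, a + 1; x) + y t_n` by the number `j` of copies of `t_n`,
the fibres have sizes `x + 2(y - j)` for `j ≤ y` and `max(0, x + 1 - 2(j - y))` for `j > y`, as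
long as `3x ≤ 2a` and `3y ≤ a`; they add up to `(y + 1)(x + y) + ⌊x/2⌋⌈x/2⌉`, which is `s` for
`(x, y) = (x_s^odd, y_s^odd)`. The bound `n > N_s^odd` guarantees `3x ≤ 2a` and `3y ≤ a`.
-/

theorem le_of_sum_mul_eq {k : ℕ} {w x : Fin k → ℕ} {m : ℕ} (h : ∑ j, w j * x j = m) {i : Fin k}
    (hi : 0 < w i) : x i ≤ m :=
  calc x i ≤ w i * x i := Nat.le_mul_of_pos_left _ hi
    _ ≤ ∑ j, w j * x j :=
      single_le_sum (f := fun j => w j * x j) (fun _ _ => Nat.zero_le _) (mem_univ i)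
    _ = m := h

theorem repCount_eq_card_filter_piFinset {k : ℕ} (w : Fin k → ℕ) (hw : ∀ i, 0 < w i)
    {m B : ℕ} (hmB : m ≤ B) :
    repCount w m =
      #{x ∈ Fintype.piFinset fun _ => range (B + 1) | ∑ i, w i * x i = m} := by
  refine card_nbij' (fun x i => (x i : ℕ)) (fun x i => ⟨min (x i) m, by omega⟩) ?_ ?_ ?_ ?_
  · intro x hx
    simp only [coe_filter, mem_univ, true_and, Set.mem_ofPred_eq, Fintype.mem_piFinset,
      mem_range] at hx ⊢
    exact ⟨fun i => by have := (x i).isLt; omega, hx⟩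
  · intro x hx
    simp only [coe_filter, Fintype.mem_piFinset, Set.mem_ofPred_eq, mem_univ,
      true_and] at hx ⊢
    simpa [min_eq_left (le_of_sum_mul_eq hx.2 (hw _))] using hx.2
  · intro x _
    funext i
    ext
    simp [Nat.lt_succ_iff.mp (x i).isLt]
  · intro x hx
    simp only [coe_filter, Fintype.mem_piFinset, Set.mem_ofPred_eq] at hx
    funext i
    simp [le_of_sum_mul_eq hx.2 (hw i)]

theorem repCount_cons {k : ℕ} {c : ℕ} (hc : 0 < c) {w : Fin k → ℕ} (hw : ∀ i, 0 < w i) (m : ℕ) :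
    repCount (Fin.cons c w : Fin (k + 1) → ℕ) m =
      ∑ j ∈ range (m / c + 1), repCount w (m - c * j) := by
  have hcw : ∀ i, 0 < (Fin.cons c w : Fin (k + 1) → ℕ) i := Fin.cases hc hw
  rw [repCount_eq_card_filter_piFinset _ hcw le_rfl, card_eq_sum_card_fiberwise (f := fun x => x 0)
    (t := range (m / c + 1))]
  · refine sum_congr rfl fun j hj => ?_
    have hcj : c * j ≤ m := by
      rw [mul_comm, ← Nat.le_div_iff_mul_le hc]
      exact Nat.lt_succ_iff.mp (mem_range.mp hj)
    rw [repCount_eq_card_filter_piFinset w hw (Nat.sub_le m (c * j)), filter_filter]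
    refine card_nbij' Fin.tail (fun y => (Fin.cons j y : Fin (k + 1) → ℕ)) ?_ ?_ ?_ ?_
    · intro x hx
      simp only [coe_filter, Fintype.mem_piFinset, Set.mem_ofPred_eq, Fin.sum_univ_succ,
        Fin.cons_zero, Fin.cons_succ, Fin.forall_fin_succ] at hx ⊢
      obtain ⟨⟨_, hxs⟩, hsum, rfl⟩ := hx
      exact ⟨hxs, by simp only [Fin.tail]; omega⟩
    · intro y hy
      simp only [coe_filter, Fintype.mem_piFinset, Set.mem_ofPred_eq, Fin.sum_univ_succ,
        Fin.cons_zero, Fin.cons_succ, Fin.forall_fin_succ] at hy ⊢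
      refine ⟨⟨mem_range.mpr ?_, hy.1⟩, by omega, trivial⟩
      nlinarith
    · intro x hx
      simp only [coe_filter, Set.mem_ofPred_eq] at hx
      simp [← hx.2, Fin.cons_self_tail]
    · intro y _
      simp
  · intro x hx
    simp only [coe_filter, Fintype.mem_piFinset, Set.mem_ofPred_eq, Fin.sum_univ_succ,
        Fin.cons_zero, Fin.cons_succ, coe_range, Set.mem_Iio] at hx ⊢
    rw [Nat.lt_succ_iff, Nat.le_div_iff_mul_le hc, mul_comm]
    omega

theorem eq_of_mul_add_succ_mul_eq {a q r x₀ x₁ : ℕ} (hr : r < a)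
    (h : a * x₀ + (a + 1) * x₁ = a * q + r) :
    x₁ = a * (x₁ / a) + r ∧ x₀ + (a + 1) * (x₁ / a) + r = q := by
  have hmod : x₁ % a = r := by
    have := congrArg (· % a) h
    simp only [show a * x₀ + (a + 1) * x₁ = a * (x₀ + x₁) + x₁ by ring, Nat.mul_add_mod,
      Nat.mod_eq_of_lt hr] at this
    exact this
  have hx₁ : x₁ = a * (x₁ / a) + r := by rw [← hmod, Nat.div_add_mod]
  refine ⟨hx₁, Nat.eq_of_mul_eq_mul_left (by omega : 0 < a) ?_⟩
  rw [hx₁] at h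
  linear_combination h

theorem repCount_consecutive {a r : ℕ} (hr : r < a) (q : ℕ) :
    repCount ![a, a + 1] (a * q + r) = (q + a + 1 - r) / (a + 1) := by
  have hpos : ∀ i, 0 < (![a, a + 1] : Fin 2 → ℕ) i := by
    simp [Fin.forall_fin_two]; omega
  have hlt : ∀ v, v < (q + a + 1 - r) / (a + 1) ↔ (a + 1) * v + r ≤ q := by
    intro v
    rw [Nat.lt_iff_add_one_le, Nat.le_div_iff_mul_le (by omega),
      show (v + 1) * (a + 1) = (a + 1) * v + (a + 1) by ring]
    omega
  rw [repCount_eq_card_filter_piFinset _ hpos le_rfl, ← card_range ((q + a + 1 - r) / (a + 1))]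
  symm
  refine card_nbij' (fun v => ![q - r - (a + 1) * v, r + a * v]) (fun x => x 1 / a) ?_ ?_ ?_ ?_
  · intro v hv
    obtain ⟨d, rfl⟩ : ∃ d, q = d + (a + 1) * v + r := ⟨q - r - (a + 1) * v, by
      have := (hlt v).mp (mem_range.mp hv); omega⟩
    have hsum : ∑ i, ![a, a + 1] i * ![d, r + a * v] i = a * (d + (a + 1) * v + r) + r := by
      simp only [Fin.sum_univ_two, Matrix.cons_val_zero, Matrix.cons_val_one]
      ring
    simp only [coe_filter, Fintype.mem_piFinset, Set.mem_ofPred_eq,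
      show d + (a + 1) * v + r - r - (a + 1) * v = d by omega]
    exact ⟨fun i => mem_range.mpr (Nat.lt_succ_of_le (le_of_sum_mul_eq hsum (hpos i))), hsum⟩
  · intro x hx
    simp only [coe_filter, Fintype.mem_piFinset, Set.mem_ofPred_eq, Fin.sum_univ_two,
      Matrix.cons_val_zero, Matrix.cons_val_one] at hx
    simp only [coe_range, Set.mem_Iio, hlt]
    have := (eq_of_mul_add_succ_mul_eq hr hx.2).2
    omega
  · intro v _
    show (r + a * v) / a = v
    rw [Nat.add_mul_div_left _ _ (by omega), Nat.div_eq_of_lt hr, zero_add]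
  · intro x hx
    simp only [coe_filter, Fintype.mem_piFinset, Set.mem_ofPred_eq, Fin.sum_univ_two,
      Matrix.cons_val_zero, Matrix.cons_val_one] at hx
    obtain ⟨h₁, h₀⟩ := eq_of_mul_add_succ_mul_eq hr hx.2
    funext i
    fin_cases i
    · simp; omega
    · simp; omega

theorem genFrob_consecutive {a : ℕ} (ha : 0 < a) (x : ℕ) :
    genFrob ![a, a + 1] x = (x + 1 : ℤ) * a * (a + 1) - (2 * a + 1) := by
  apply IsGreatest.csSup_eq
  constructor
  · show repCountZ ![a, a + 1] _ ≤ x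
    unfold repCountZ
    split_ifs with hG
    · obtain ⟨Q, hQ⟩ : ∃ Q, (x + 1) * (a + 1) = Q + 3 := by
        refine ⟨(x + 1) * (a + 1) - 3, (Nat.sub_add_cancel ?_).symm⟩
        by_contra! h
        have : ((x + 1) * (a + 1) : ℤ) ≤ 2 := by exact_mod_cast Nat.lt_succ_iff.mp h
        nlinarith
      have hm : ((x + 1 : ℤ) * a * (a + 1) - (2 * a + 1)).toNat = a * Q + (a - 1) := by
        have : ((x + 1 : ℤ) * (a + 1)) = Q + 3 := by exact_mod_cast hQ
        rw [show (x + 1 : ℤ) * a * (a + 1) - (2 * a + 1) = ((a * Q + (a - 1) : ℕ) : ℤ) by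
          push_cast [Nat.one_le_iff_ne_zero.mpr ha.ne']
          linear_combination (a : ℤ) * this, Int.toNat_natCast]
      rw [hm, repCount_consecutive (by omega), Nat.div_le_iff_le_mul_add_pred (by omega)]
      have : (a + 1) * x + a + 1 = Q + 3 := by linarith
      omega
    · exact Nat.zero_le x
  · intro m hm
    have hcount (m : ℕ) :
        repCount ![a, a + 1] m = (m / a + a + 1 - m % a) / (a + 1) := by
      conv_lhs => rw [← Nat.div_add_mod m a]
      exact repCount_consecutive (Nat.mod_lt m ha) _
    by_contra! hGm
    have hm0 : 0 ≤ m := by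
      have ha' : (1 : ℤ) ≤ a := by exact_mod_cast ha
      have hx : (0 : ℤ) ≤ x := x.cast_nonneg
      nlinarith [mul_nonneg (mul_nonneg hx (by omega : (0 : ℤ) ≤ a)) (by omega : (0 : ℤ) ≤ a)]
    simp only [Set.mem_ofPred_eq, repCountZ, if_pos hm0, hcount] at hm
    have hdiv := Nat.div_add_mod m.toNat a
    have hr := Nat.mod_lt m.toNat ha
    set q := m.toNat / a
    set r := m.toNat % a
    have hq : (x + 1) * (a + 1) < q + 3 := by
      refine Nat.lt_of_mul_lt_mul_left (a := a) ?_
      have : (m.toNat : ℤ) = m := Int.toNat_of_nonneg hm0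
      zify at hr ⊢
      nlinarith
    have : x + 1 ≤ (q + a + 1 - r) / (a + 1) := by
      rw [Nat.le_div_iff_mul_le (by omega)]
      omega
    omega

theorem repCount_mul_consecutive {a b r : ℕ} (hb : 0 < b) (hr : r < a) (Q : ℕ) :
    repCount ![a * b, a, a + 1] (a * Q + r) =
      ∑ j ∈ range (Q / b + 1), (Q - b * j + a + 1 - r) / (a + 1) := by
  have ha : 0 < a := by omega
  have hpos : ∀ i, 0 < (![a, a + 1] : Fin 2 → ℕ) i := by
    simp [Fin.forall_fin_two]; omega
  have hdiv : (a * Q + r) / (a * b) = Q / b := by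
    rw [← Nat.div_div_eq_div_mul, Nat.mul_add_div ha, Nat.div_eq_of_lt hr, add_zero]
  rw [show ![a * b, a, a + 1] = Fin.cons (a * b) ![a, a + 1] from rfl,
    repCount_cons (Nat.mul_pos ha hb) hpos, hdiv]
  refine sum_congr rfl fun j hj => ?_
  have hbj : b * j ≤ Q := by
    rw [mul_comm, ← Nat.le_div_iff_mul_le hb]
    exact Nat.lt_succ_iff.mp (mem_range.mp hj)
  rw [show a * Q + r - a * b * j = a * (Q - b * j) + r by
    rw [Nat.mul_sub, mul_assoc]; have := Nat.mul_le_mul_left a hbj; omega]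
  exact repCount_consecutive hr _

/-- The number of representations of `g(a, a + 1; x) + y (a n)` by `a n, a, a + 1` that use
`a n` exactly `j` times. -/
theorem fiber_count {a n x y : ℕ} (hn : n + 1 = 2 * a) (hx : 3 * x ≤ 2 * a) (hy : 3 * y ≤ a)
    (j : ℕ) :
    (x * (a + 1) + a + y * n - n * j) / (a + 1) =
      if j ≤ y then x + 2 * (y - j) else x + 1 - 2 * (j - y) := by
  split_ifs with hj
  · obtain ⟨e, rfl⟩ : ∃ e, y = j + e := ⟨y - j, by omega⟩
    have h : (x + 2 * e) * (a + 1) = x * (a + 1) + e * n + 3 * e := by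
      linear_combination e * hn.symm
    rw [show x * (a + 1) + a + (j + e) * n - n * j = x * (a + 1) + a + e * n by
      rw [add_mul, mul_comm j]; omega, show j + e - j = e by omega]
    exact Nat.div_eq_of_lt_le (by omega) (by rw [add_one_mul]; omega)
  · obtain ⟨f, rfl⟩ : ∃ f, j = y + f := ⟨j - y, by omega⟩
    rw [show x * (a + 1) + a + y * n - n * (y + f) = x * (a + 1) + a - f * n by
      rw [Nat.mul_add n y f, mul_comm n y, mul_comm n f]; omega, show y + f - y = f by omega]
    rcases le_or_gt (2 * f) (x + 1) with hf | hf
    · obtain ⟨g, hg⟩ : ∃ g, x + 1 = 2 * f + g := ⟨x + 1 - 2 * f, by omega⟩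
      have h : x * (a + 1) + a + 1 = f * n + 3 * f + g * (a + 1) := by
        linear_combination (a + 1) * hg + f * hn.symm
      rw [show x + 1 - 2 * f = g by omega]
      exact Nat.div_eq_of_lt_le (by omega) (by rw [add_one_mul]; omega)
    · have h : x * (a + 1) ≤ f * n := by nlinarith
      rw [show x + 1 - 2 * f = 0 by omega, Nat.div_eq_zero_iff_lt (by omega)]
      omega

theorem sum_range_add_two_mul_sub (x y : ℕ) :
    ∑ j ∈ range (y + 1), (x + 2 * (y - j)) = (y + 1) * (x + y) := by
  induction y with
  | zero => simp
  | succ y ih =>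
    simp only [sum_range_succ', Nat.add_sub_add_right, ih]
    ring_nf
    omega

theorem sum_range_sub_one_sub_two_mul {x p : ℕ} (hp : 2 * p ≤ x) :
    ∑ f ∈ range p, (x - 1 - 2 * f) = p * (x - p) := by
  induction p with
  | zero => simp
  | succ p ih =>
    rw [sum_range_succ, ih (by omega)]
    obtain ⟨d, rfl⟩ : ∃ d, x = 2 * p + 2 + d := ⟨x - 2 * p - 2, by omega⟩
    rw [show 2 * p + 2 + d - 1 - 2 * p = d + 1 by omega,
      show 2 * p + 2 + d - p = p + 2 + d by omega,
      show 2 * p + 2 + d - (p + 1) = p + 1 + d by omega]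
    ring

theorem repCountZ_genFrob_add {a n x y : ℕ} (hn : n + 1 = 2 * a) (hx : 3 * x ≤ 2 * a)
    (hy : 3 * y ≤ a) :
    repCountZ ![a * n, a, a + 1] (genFrob ![a, a + 1] x + ((y * (a * n) : ℕ) : ℤ)) =
      (y + 1) * (x + y) + x / 2 * ((x + 1) / 2) := by
  rw [genFrob_consecutive (by omega)]
  rcases Nat.lt_or_ge a 2 with ha | ha
  · obtain ⟨rfl, rfl, rfl⟩ : a = 1 ∧ x = 0 ∧ y = 0 := by omega
    simp [repCountZ]
  set Q := x * (a + 1) + (a - 2) + y * n with hQ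
  have hM : (x + 1 : ℤ) * a * (a + 1) - (2 * a + 1) + ((y * (a * n) : ℕ) : ℤ) =
      ((a * Q + (a - 1) : ℕ) : ℤ) := by
    push_cast [hQ, Nat.cast_sub ha, Nat.cast_sub (by omega : 1 ≤ a)]
    ring
  let φ : ℕ → ℕ := fun j => if j ≤ y then x + 2 * (y - j) else x + 1 - 2 * (j - y)
  have hφ (j : ℕ) : φ j = (x * (a + 1) + a + y * n - n * j) / (a + 1) :=
    (fiber_count hn hx hy j).symm
  have hsum : ∑ j ∈ range (Q / n + 1), φ j = ∑ j ∈ range (y + 1 + x / 2), φ j := by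
    have hφQ : ∀ j ≥ Q / n + 1, φ j = 0 := by
      intro j hj
      have : Q < n * j := by
        rw [mul_comm]; exact Nat.lt_mul_of_div_lt hj (by omega)
      rw [hφ, Nat.div_eq_zero_iff_lt (by omega)]
      omega
    have hφy : ∀ j ≥ y + 1 + x / 2, φ j = 0 := by
      intro j hj
      simp only [φ, if_neg (by omega : ¬ j ≤ y)]
      omega
    rw [← eventually_constant_sum hφQ (Nat.le_add_right _ (y + 1 + x / 2)),
      eventually_constant_sum hφy (Nat.le_add_left _ _)]
  rw [hM, repCountZ, if_pos (Int.natCast_nonneg _), Int.toNat_natCast,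
    repCount_mul_consecutive (by omega) (by omega)]
  have hterm : ∀ j ∈ range (Q / n + 1), (Q - n * j + a + 1 - (a - 1)) / (a + 1) = φ j := by
    intro j hj
    have : n * j ≤ Q := by
      rw [mul_comm, ← Nat.le_div_iff_mul_le (by omega)]
      exact Nat.lt_succ_iff.mp (mem_range.mp hj)
    rw [hφ]
    congr 1
    omega
  rw [sum_congr rfl hterm, hsum, sum_range_add]
  have hlow : ∀ j ∈ range (y + 1), φ j = x + 2 * (y - j) := fun j hj => by
    simp only [φ, if_pos (Nat.lt_succ_iff.mp (mem_range.mp hj))]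
  have hhigh : ∀ f ∈ range (x / 2), φ (y + 1 + f) = x - 1 - 2 * f := fun f _ => by
    simp only [φ, if_neg (by omega : ¬ y + 1 + f ≤ y)]
    omega
  rw [sum_congr rfl hlow, sum_congr rfl hhigh, sum_range_add_two_mul_sub,
    sum_range_sub_one_sub_two_mul (by omega), show x - x / 2 = (x + 1) / 2 by omega]

theorem NOdd_ge (k i : ℕ) : 6 * (k : ℤ) - 3 ≤ NOdd (k * (k + 1) + i) := by
  have : 2 * k + 1 ≤ Nat.sqrt (4 * (k * (k + 1) + i) + 5) := by
    rw [Nat.le_sqrt]; nlinarith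
  unfold NOdd
  have : k ≤ (Nat.sqrt (4 * (k * (k + 1) + i) + 5) - 1) / 2 := by omega
  omega

theorem NOdd_add_two_mul_add_one (k : ℕ) : NOdd (k * (k + 1) + (2 * k + 1)) = 6 * k + 3 := by
  rw [NOdd, show 4 * (k * (k + 1) + (2 * k + 1)) + 5 = (2 * k + 3) * (2 * k + 3) by ring,
    Nat.sqrt_eq, show (2 * k + 3 - 1) / 2 = k + 1 by omega]
  push_cast
  ring

theorem t_eq_mul {a n : ℕ} (hn : n + 1 = 2 * a) : t n = a * n := by
  rw [t, hn, mul_left_comm, Nat.mul_div_cancel_left _ two_pos, mul_comm]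

/-- with `s = k(k+1) + i`, `0 ≤ i ≤ 2k+1`, for odd `n > N_s^odd`,
`d(g((n+1)/2, (n+3)/2; x_s^odd) + y_s^odd·t_n ; t_n, (n+1)/2, (n+3)/2) = s`. -/
theorem stmt_9 (k i n : ℕ) (hi : i ≤ 2 * k + 1) (hn : Odd n)
    (hbound : (n : ℤ) > NOdd (k * (k + 1) + i)) :
    repCountZ ![t n, (n + 1) / 2, (n + 3) / 2]
        (genFrob ![(n + 1) / 2, (n + 3) / 2] (xOddN k i) + ((yOddN k i * t n : ℕ) : ℤ)) =
      k * (k + 1) + i := by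
  obtain ⟨a, hna⟩ : ∃ a, n + 1 = 2 * a := ⟨(n + 1) / 2, by obtain ⟨m, rfl⟩ := hn; omega⟩
  rw [show (n + 1) / 2 = a by omega, show (n + 3) / 2 = a + 1 by omega, t_eq_mul hna]
  have hk : 3 * k ≤ a := by have := NOdd_ge k i; omega
  rcases le_or_gt i k with hik | hik
  · simp only [xOddN, yOddN, if_pos hik]
    rw [repCountZ_genFrob_add hna (by omega) (by omega), show 2 * i / 2 = i by omega,
      show (2 * i + 1) / 2 = i by omega]
    obtain ⟨d, rfl⟩ : ∃ d, k = i + d := ⟨k - i, by omega⟩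
    rw [show i + d - i = d by omega]
    ring
  · obtain ⟨u, rfl⟩ : ∃ u, i = k + 1 + u := ⟨i - k - 1, by omega⟩
    have hu : 3 * u + 3 ≤ a := by
      rcases Nat.lt_or_ge u k with huk | huk
      · omega
      · have := NOdd_add_two_mul_add_one k
        rw [show k + 1 + u = 2 * k + 1 by omega] at hbound
        omega
    simp only [xOddN, yOddN, if_neg (by omega : ¬ k + 1 + u ≤ k)]
    rw [show 2 * (k + 1 + u - k) - 1 = 2 * u + 1 by omega,
      show 2 * k + 1 - (k + 1 + u) = k - u by omega,
      repCountZ_genFrob_add hna (by omega) (by omega), show (2 * u + 1) / 2 = u by omega,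
      show (2 * u + 1 + 1) / 2 = u + 1 by omega]
    obtain ⟨d, rfl⟩ : ∃ d, k = u + d := ⟨k - u, by omega⟩
    rw [show u + d - u = d by omega]
    ring
end

section
/- Let s ≥ 0 be an integer. For every even integer n with n > N_s^even, the generalized Frobenius number of the triple (t_n, n+1, n+3) satisfies g(t_n, n+1, n+3; s) = g(n+1, n+3; x_s^even) + y_s^even·t_n = (x_s^even + 1)(n+1)(n+3) − (n+1) − (n+3) + y_s^even·t_n. (Here n+1 = t_{n+1}/d_1 and n+3 = t_{n+2}/d_1 where d_1 = gcd(t_{n+1}, t_{n+2}) = (n+2)/2 for even n.) -/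
open Finset

/-!
Write `n = 2m`, so the triple is `(m b, b, c)` with the coprime pair `b = 2m+1`, `c = 2m+3`.
Every `N` has a unique lift `Q` with `b Q ≡ N [MOD c]` and `N < b Q ≤ N + b c`; the
representations `b y + c z = N` are then exactly the `y < Q` with `y ≡ Q [MOD c]`. Hence
`N` has `Q / c` representations by `(b, c)` and `∑_{j < Q/c} (⌊(Q % c + j c)/m⌋ + 1)` by
`(m b, b, c)`. Since `N + c ≤ b Q`, with equality for `N = b P - c`, the Frobenius number
is `b P - c` as soon as `P` has count `≤ s` and every larger lift has count `> s`.

For the triple the count of `Q = ρ + J c` is `J² + ∑_{j<J} ⌊(ρ + 3j)/m⌋`: at least `J²` and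
monotone in `ρ`. So it is enough to exhibit `(J, ρ)` whose count is `≤ s`, with `s < (J+1)²`
and count `> s` at `ρ + 1`. For `m > N_s^even / 2` the floors `⌊(ρ + 3j)/m⌋` along the
extremal class take only two consecutive values, which makes both counts explicit.
-/

def pairReps (b c N : ℕ) : Finset (ℕ × ℕ) :=
  (range (N + 1) ×ˢ range (N + 1)).filter fun p => b * p.1 + c * p.2 = N

def tripleReps (a b c N : ℕ) : Finset (ℕ × ℕ × ℕ) :=
  (range (N + 1) ×ˢ range (N + 1) ×ˢ range (N + 1)).filter
    fun p => a * p.1 + b * p.2.1 + c * p.2.2 = N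

lemma repCount_two_eq_card (b c N : ℕ) : repCount ![b, c] N = #(pairReps b c N) := by
  refine card_nbij' (fun x => ((x 0 : ℕ), (x 1 : ℕ)))
    (fun p => ![Fin.ofNat (N + 1) p.1, Fin.ofNat (N + 1) p.2]) ?_ ?_ ?_ ?_
  · intro x hx
    simp_all [pairReps, Fin.sum_univ_two, Fin.is_le]
  · intro p hp
    simp_all [pairReps, Fin.sum_univ_two, Nat.mod_eq_of_lt]
  · intro x hx
    ext i
    fin_cases i <;> simp
  · intro p hp
    simp_all [pairReps, Nat.mod_eq_of_lt]

lemma repCount_three_eq_card (a b c N : ℕ) : repCount ![a, b, c] N = #(tripleReps a b c N) := by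
  refine card_nbij' (fun x => ((x 0 : ℕ), (x 1 : ℕ), (x 2 : ℕ)))
    (fun p => ![Fin.ofNat (N + 1) p.1, Fin.ofNat (N + 1) p.2.1, Fin.ofNat (N + 1) p.2.2])
    ?_ ?_ ?_ ?_
  · intro x hx
    simp_all [tripleReps, Fin.sum_univ_three, add_assoc, Fin.is_le]
  · intro p hp
    simp_all [tripleReps, Fin.sum_univ_three, Nat.mod_eq_of_lt, add_assoc]
  · intro x hx
    ext i
    fin_cases i <;> simp
  · intro p hp
    simp_all [tripleReps, Nat.mod_eq_of_lt]

lemma card_tripleReps_mul {m b c N : ℕ} (hm : 0 < m) (hb : 0 < b) :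
    #(tripleReps (m * b) b c N) = ∑ p ∈ pairReps b c N, (p.1 / m + 1) := by
  rw [card_eq_sum_card_fiberwise (f := fun q => (m * q.1 + q.2.1, q.2.2))]
  · refine sum_congr rfl fun p hp => ?_
    rw [← card_range (p.1 / m + 1)]
    simp only [pairReps, mem_filter, mem_product, mem_range] at hp
    refine card_nbij' (fun q => q.1) (fun j => (j, p.1 - m * j, p.2)) ?_ ?_ ?_ ?_
    · intro q hq
      simp only [mem_coe, mem_filter, tripleReps, mem_product, mem_range, Prod.ext_iff] at hq
      simp only [mem_coe, mem_range, Nat.lt_succ_iff]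
      exact (Nat.le_div_iff_mul_le hm).2 (by rw [mul_comm]; omega)
    · intro j hj
      simp only [mem_coe, mem_range, Nat.lt_succ_iff] at hj
      have hmj : j * m ≤ p.1 := (Nat.le_div_iff_mul_le hm).1 hj
      rw [mul_comm] at hmj
      have hj' : j ≤ m * j := Nat.le_mul_of_pos_left j hm
      simp only [mem_coe, mem_filter, tripleReps, mem_product, mem_range, Prod.ext_iff]
      have : m * b * j + b * (p.1 - m * j) = b * p.1 := by
        rw [mul_comm m b, mul_assoc, ← Nat.mul_add, Nat.add_sub_cancel' hmj]
      exact ⟨⟨⟨by omega, by omega, hp.1.2⟩, by rw [this]; exact hp.2⟩, by omega, trivial⟩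
    · intro q hq
      simp only [mem_coe, mem_filter, tripleReps, mem_product, mem_range, Prod.ext_iff] at hq
      ext <;> simp <;> omega
    · intro j _
      rfl
  · intro q hq
    simp only [mem_coe, tripleReps, mem_filter, mem_product, mem_range] at hq
    simp only [mem_coe, pairReps, mem_filter, mem_product, mem_range]
    refine ⟨⟨?_, hq.1.2.2⟩, by rw [← hq.2]; ring⟩
    have : m * q.1 + q.2.1 ≤ b * (m * q.1 + q.2.1) := Nat.le_mul_of_pos_left _ hb
    have : b * (m * q.1 + q.2.1) = m * b * q.1 + b * q.2.1 := by ring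
    omega

def IsLift (b c N Q : ℕ) : Prop :=
  b * Q ≡ N [MOD c] ∧ N < b * Q ∧ b * Q ≤ N + b * c

section Lift

variable {b c N Q : ℕ}

lemma IsLift.add_le (hQ : IsLift b c N Q) : N + c ≤ b * Q := by
  obtain ⟨hmod, hlt, -⟩ := hQ
  have := Nat.le_of_dvd (Nat.sub_pos_of_lt hlt) ((Nat.modEq_iff_dvd' hlt.le).1 hmod.symm)
  omega

lemma isLift_of_add_eq (hb : 0 < b) (hc : 0 < c) (h : N + c = b * Q) : IsLift b c N Q := by
  have : c ≤ b * c := Nat.le_mul_of_pos_left c hb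
  exact ⟨h ▸ Nat.add_modEq_right, by omega, by omega⟩

lemma exists_isLift (hcop : Nat.Coprime b c) (hb : 0 < b) (hc : 0 < c) (N : ℕ) :
    ∃ Q, IsLift b c N Q := by
  obtain ⟨k, hk0, hkN⟩ := Nat.chineseRemainder hcop 0 N
  have hk : b * (k / b) = k := Nat.mul_div_cancel' (Nat.modEq_zero_iff_dvd.1 hk0)
  have hex : ∃ Q, b * Q ≡ N [MOD c] ∧ N < b * Q := by
    refine ⟨k / b + (N + 1) * c, ?_, ?_⟩
    · rwa [mul_add, hk, ← mul_assoc, Nat.add_mul_modulus_modEq_iff]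
    · have : N + 1 ≤ (N + 1) * c := Nat.le_mul_of_pos_right _ hc
      nlinarith
  obtain ⟨hmod, hlt⟩ := Nat.find_spec hex
  refine ⟨Nat.find hex, hmod, hlt, ?_⟩
  rcases lt_or_ge (Nat.find hex) c with hsmall | hge
  · nlinarith
  · have hsplit : b * Nat.find hex = b * (Nat.find hex - c) + b * c := by
      rw [← mul_add, Nat.sub_add_cancel hge]
    rw [hsplit, Nat.add_mul_modulus_modEq_iff] at hmod
    have := Nat.find_min hex (show Nat.find hex - c < Nat.find hex by omega)
    have : b * (Nat.find hex - c) ≤ N := by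
      by_contra h
      exact this ⟨hmod, by omega⟩
    omega

lemma IsLift.modEq_and_lt_of_mem (hcop : Nat.Coprime b c) (hQ : IsLift b c N Q) {p : ℕ × ℕ}
    (hp : p ∈ pairReps b c N) : p.1 ≡ Q [MOD c] ∧ p.1 < Q := by
  obtain ⟨hmod, hlt, -⟩ := hQ
  simp only [pairReps, mem_filter, mem_product, mem_range] at hp
  have hbp : b * p.1 ≡ b * Q [MOD c] := by
    refine Nat.ModEq.trans ?_ hmod.symm
    rw [← hp.2]
    exact (Nat.add_mul_mod_self_left _ _ _).symm
  exact ⟨Nat.ModEq.cancel_left_of_coprime hcop.symm hbp,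
    Nat.lt_of_mul_lt_mul_left (a := b) (by omega : b * p.1 < b * Q)⟩

lemma IsLift.mem_pairReps (hb : 0 < b) (hc : 0 < c) (hQ : IsLift b c N Q) {y : ℕ}
    (hyQ : y ≡ Q [MOD c]) (hy : y < Q) : (y, (N - b * y) / c) ∈ pairReps b c N := by
  obtain ⟨hmod, -, hle⟩ := hQ
  have hyc : y + c ≤ Q := by
    have := Nat.le_of_dvd (Nat.sub_pos_of_lt hy) ((Nat.modEq_iff_dvd' hy.le).1 hyQ)
    omega
  have : b * y + b * c ≤ b * Q := by rw [← mul_add]; exact Nat.mul_le_mul_left b hyc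
  have hyN : b * y ≤ N := by omega
  have hz := Nat.mul_div_cancel' ((Nat.modEq_iff_dvd' hyN).1 ((hyQ.mul_left b).trans hmod))
  have : y ≤ b * y := Nat.le_mul_of_pos_left y hb
  have : (N - b * y) / c ≤ c * ((N - b * y) / c) := Nat.le_mul_of_pos_left _ hc
  simp only [pairReps, mem_filter, mem_product, mem_range]
  omega

lemma IsLift.sum_pairReps {M : Type*} [AddCommMonoid M] (hcop : Nat.Coprime b c)
    (hb : 0 < b) (hc : 0 < c) (hQ : IsLift b c N Q) (f : ℕ → M) :
    ∑ p ∈ pairReps b c N, f p.1 = ∑ j ∈ range (Q / c), f (Q % c + j * c) := by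
  have hQsplit : Q % c + c * (Q / c) = Q := Nat.mod_add_div Q c
  have hrep : ∀ p ∈ pairReps b c N, p.1 = Q % c + p.1 / c * c ∧ p.1 / c < Q / c := by
    intro p hp
    obtain ⟨hpQ, hlt⟩ := hQ.modEq_and_lt_of_mem hcop hp
    have hpsplit : p.1 % c + c * (p.1 / c) = p.1 := Nat.mod_add_div p.1 c
    rw [Nat.ModEq] at hpQ
    exact ⟨by rw [mul_comm]; omega, Nat.lt_of_mul_lt_mul_left (a := c) (by omega)⟩
  refine sum_nbij' (fun p => p.1 / c) (fun j => (Q % c + j * c, (N - b * (Q % c + j * c)) / c))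
    (fun p hp => mem_range.2 (hrep p hp).2) (fun j hj => ?_) (fun p hp => ?_) (fun j hj => ?_)
    (fun p hp => by rw [← (hrep p hp).1])
  · rw [mem_range] at hj
    refine hQ.mem_pairReps hb hc ?_ ?_
    · rw [Nat.ModEq, Nat.add_mul_mod_self_right, Nat.mod_mod]
    · have := Nat.mul_le_mul_left c (show j + 1 ≤ Q / c from hj)
      rw [mul_add, mul_one, mul_comm c] at this
      omega
  · have h := (hrep p hp).1
    simp only [pairReps, mem_filter] at hp
    refine Prod.ext h.symm ?_
    simp only [← h]
    rw [← hp.2, Nat.add_sub_cancel_left, Nat.mul_div_cancel_left _ hc]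
  · rw [Nat.add_mul_div_right _ _ hc, Nat.div_eq_of_lt (Nat.mod_lt Q hc), zero_add]

lemma IsLift.repCount_two (hcop : Nat.Coprime b c) (hb : 0 < b) (hc : 0 < c)
    (hQ : IsLift b c N Q) : repCount ![b, c] N = Q / c := by
  rw [repCount_two_eq_card, card_eq_sum_ones, hQ.sum_pairReps hcop hb hc (fun _ => 1),
    sum_const, card_range, smul_eq_mul, mul_one]

end Lift

def classCount (m c J ρ : ℕ) : ℕ := ∑ j ∈ range J, ((ρ + j * c) / m + 1)

lemma IsLift.repCount_three {m b c N Q : ℕ} (hm : 0 < m) (hcop : Nat.Coprime b c) (hb : 0 < b)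
    (hc : 0 < c) (hQ : IsLift b c N Q) :
    repCount ![m * b, b, c] N = classCount m c (Q / c) (Q % c) := by
  rw [repCount_three_eq_card, card_tripleReps_mul hm hb,
    hQ.sum_pairReps hcop hb hc (fun y => y / m + 1), classCount]

section Frobenius

variable {k : ℕ} {a : Fin k → ℕ} {s : ℕ}

lemma genFrob_eq_of_forall {G : ℤ} (hG : -1 ≤ G) (hle : repCountZ a G ≤ s)
    (hlt : ∀ N : ℕ, G < N → s < repCount a N) : genFrob a s = G := by
  have hub : ∀ M ∈ {M : ℤ | repCountZ a M ≤ s}, M ≤ G := by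
    intro M hM
    by_contra! h
    lift M to ℕ using by omega
    exact (hlt M h).not_ge (by simpa [repCountZ] using hM)
  exact le_antisymm (csSup_le ⟨G, hle⟩ hub) (le_csSup ⟨G, hub⟩ hle)

lemma genFrob_eq_of_isLift {b c P : ℕ} {G : ℤ} (hcop : Nat.Coprime b c) (hb : 0 < b)
    (hc : 0 < c) (w : ℕ → ℕ) (hw : ∀ N Q, IsLift b c N Q → repCount a N = w Q)
    (hGP : G + c = b * P) (hG : -1 ≤ G) (hP : w P ≤ s) (hQ : ∀ Q, P < Q → s < w Q) :
    genFrob a s = G := by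
  refine genFrob_eq_of_forall hG ?_ fun N hN => ?_
  · rcases (by omega : G = -1 ∨ 0 ≤ G) with rfl | hG0
    · simp [repCountZ]
    · lift G to ℕ using hG0
      rw [repCountZ, if_pos (by positivity), Int.toNat_natCast,
        hw G P (isLift_of_add_eq hb hc (by exact_mod_cast hGP))]
      exact hP
  · obtain ⟨Q, hNQ⟩ := exists_isLift hcop hb hc N
    rw [hw N Q hNQ]
    refine hQ Q (Nat.lt_of_mul_lt_mul_left (a := b) ?_)
    have := hNQ.add_le
    zify at this ⊢
    linarith

end Frobenius

theorem genFrob_pair {b c : ℕ} (hcop : Nat.Coprime b c) (hb : 0 < b) (hc : 0 < c) (x : ℕ) :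
    genFrob ![b, c] x = ((x : ℤ) + 1) * b * c - b - c := by
  obtain ⟨P, hP⟩ : ∃ P, P + 1 = (x + 1) * c :=
    ⟨(x + 1) * c - 1, Nat.sub_add_cancel (Nat.one_le_iff_ne_zero.2 (by positivity))⟩
  refine genFrob_eq_of_isLift hcop hb hc (· / c) (fun N Q hQ => hQ.repCount_two hcop hb hc)
    (P := P) ?_ ?_ ?_ fun Q hPQ => ?_
  · have hPz : (P : ℤ) + 1 = (x + 1) * c := by exact_mod_cast hP
    linear_combination (-(b : ℤ)) * hPz
  · have hb1 : (1 : ℤ) ≤ b := by exact_mod_cast hb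
    have hc1 : (1 : ℤ) ≤ c := by exact_mod_cast hc
    have : (0 : ℤ) ≤ x * b * c := by positivity
    nlinarith [mul_nonneg (sub_nonneg.2 hb1) (sub_nonneg.2 hc1)]
  · exact Nat.lt_succ_iff.1 ((Nat.div_lt_iff_lt_mul hc).2 (show P < (x + 1) * c by omega))
  · exact (Nat.le_div_iff_mul_le hc).2 (show (x + 1) * c ≤ Q by omega)

section ClassCount

variable {m c J ρ : ℕ}

lemma classCount_mono {ρ' : ℕ} (h : ρ ≤ ρ') : classCount m c J ρ ≤ classCount m c J ρ' :=
  sum_le_sum fun _ _ => Nat.add_le_add_right (Nat.div_le_div_right (by omega)) 1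

lemma sq_le_classCount (hm : 0 < m) (hc : 2 * m ≤ c) : J ^ 2 ≤ classCount m c J ρ := by
  induction J with
  | zero => simp
  | succ J ih =>
    rw [classCount, sum_range_succ, ← classCount]
    have : 2 * J ≤ (ρ + J * c) / m := (Nat.le_div_iff_mul_le hm).2 (by nlinarith)
    nlinarith

lemma sum_range_step (J a x : ℕ) :
    ∑ j ∈ range J, (2 * j + 1 + if a ≤ j then x + 1 else x) = J ^ 2 + J * x + (J - a) := by
  induction J with
  | zero => simp
  | succ J ih =>
    rw [sum_range_succ, ih]
    split_ifs <;> ring_nf <;> omega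

lemma classCount_two_mul_add_three (hm : 0 < m) :
    classCount m (2 * m + 3) J ρ = ∑ j ∈ range J, (2 * j + 1 + (ρ + 3 * j) / m) := by
  refine sum_congr rfl fun j _ => ?_
  rw [show ρ + j * (2 * m + 3) = ρ + 3 * j + 2 * j * m by ring, Nat.add_mul_div_right _ _ hm]
  ring

lemma classCount_le_of_div_le {a x : ℕ} (hm : 0 < m)
    (h : ∀ j < J, (ρ + 3 * j) / m ≤ if a ≤ j then x + 1 else x) :
    classCount m (2 * m + 3) J ρ ≤ J ^ 2 + J * x + (J - a) := by
  rw [classCount_two_mul_add_three hm, ← sum_range_step]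
  exact sum_le_sum fun j hj => Nat.add_le_add_left (h j (mem_range.1 hj)) _

lemma le_classCount_of_le_div {a x : ℕ} (hm : 0 < m)
    (h : ∀ j < J, (if a ≤ j then x + 1 else x) ≤ (ρ + 3 * j) / m) :
    J ^ 2 + J * x + (J - a) ≤ classCount m (2 * m + 3) J ρ := by
  rw [classCount_two_mul_add_three hm, ← sum_range_step]
  exact sum_le_sum fun j hj => Nat.add_le_add_left (h j (mem_range.1 hj)) _

end ClassCount

theorem genFrob_mul_triple_eq {m b c s J ρ : ℕ} {G : ℤ} (hm : 0 < m) (hcop : Nat.Coprime b c)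
    (hb : 0 < b) (hc : 2 * m ≤ c) (hρ : ρ < c) (hGP : G + c = b * (ρ + J * c)) (hG : -1 ≤ G)
    (hle : classCount m c J ρ ≤ s) (hsq : s < (J + 1) ^ 2)
    (hnext : ρ + 1 < c → s < classCount m c J (ρ + 1)) :
    genFrob ![m * b, b, c] s = G := by
  have hc0 : 0 < c := by omega
  refine genFrob_eq_of_isLift hcop hb hc0 (fun Q => classCount m c (Q / c) (Q % c))
    (fun N Q hQ => hQ.repCount_three hm hcop hb hc0) hGP hG ?_ fun Q hPQ => ?_
  · rwa [Nat.add_mul_div_right _ _ hc0, Nat.div_eq_of_lt hρ, zero_add,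
      Nat.add_mul_mod_self_right, Nat.mod_eq_of_lt hρ]
  · have hQ : Q % c + c * (Q / c) = Q := Nat.mod_add_div Q c
    have hQc : Q % c < c := Nat.mod_lt Q hc0
    rcases lt_trichotomy (Q / c) J with hlt | heq | hgt
    · have := Nat.mul_le_mul_left c (show Q / c + 1 ≤ J from hlt)
      rw [mul_add, mul_one, mul_comm c J] at this
      omega
    · rw [heq] at hQ ⊢
      rw [mul_comm c J] at hQ
      exact (hnext (by omega)).trans_le (classCount_mono (by omega))
    · calc s < (J + 1) ^ 2 := hsq
        _ ≤ (Q / c) ^ 2 := Nat.pow_le_pow_left hgt 2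
        _ ≤ _ := sq_le_classCount hm hc

lemma coprime_two_mul_add_one_add_three (m : ℕ) : Nat.Coprime (2 * m + 1) (2 * m + 3) := by
  rw [show 2 * m + 3 = 2 + (2 * m + 1) by ring, Nat.coprime_add_self_right,
    Nat.coprime_two_right]
  exact odd_two_mul_add_one m

theorem genFrob_triangular_lower {m u i : ℕ} (hm : 0 < m) (hk : 3 * (u + i) ≤ m + 2)
    (hi : 3 * i ≤ m) :
    genFrob ![m * (2 * m + 1), 2 * m + 1, 2 * m + 3] ((u + i) * (u + i + 1) + i) =
      ((i : ℤ) + 1) * (2 * m + 1) * (2 * m + 3) - (2 * m + 1) - (2 * m + 3)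
        + 2 * u * (m * (2 * m + 1)) := by
  -- Lift `ρ + (u + i) c` with `ρ = 2m + 2 - 3u`: along it `⌊(ρ + 3j)/m⌋` is `1` for `j < u`
  -- and `2` for `j ≥ u`.
  obtain ⟨ρ, hρ⟩ : ∃ ρ, ρ + 3 * u = 2 * m + 2 := ⟨2 * m + 2 - 3 * u, by omega⟩
  have hsq : (u + i) ^ 2 + (u + i) * 1 = (u + i) * (u + i + 1) := by ring
  refine genFrob_mul_triple_eq (J := u + i) (ρ := ρ) hm (coprime_two_mul_add_one_add_three m)
    (by omega) (by omega) (by omega) ?_ ?_ ?_ ?_ fun hρc => ?_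
  · have hρz : (ρ : ℤ) + 3 * u = 2 * m + 2 := by exact_mod_cast hρ
    push_cast
    linear_combination (-(2 * m + 1 : ℤ)) * hρz
  · have : (0 : ℤ) ≤ i * ((2 * m + 1) * (2 * m + 3)) + 2 * u * (m * (2 * m + 1)) := by
      positivity
    nlinarith
  · calc classCount m (2 * m + 3) (u + i) ρ ≤ (u + i) ^ 2 + (u + i) * 1 + (u + i - u) :=
          classCount_le_of_div_le hm fun j hj => by
            split_ifs <;> exact Nat.le_of_lt_succ (Nat.div_lt_of_lt_mul (by omega))
      _ = (u + i) * (u + i + 1) + i := by omega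
  · nlinarith
  · calc (u + i) * (u + i + 1) + i < (u + i) ^ 2 + (u + i) * 1 + (u + i - (u - 1)) := by omega
      _ ≤ classCount m (2 * m + 3) (u + i) (ρ + 1) :=
          le_classCount_of_le_div hm fun j hj => by
            split_ifs <;> exact (Nat.le_div_iff_mul_le hm).2 (by omega)

theorem genFrob_triangular_upper {m x u : ℕ} (hm : 0 < m) (hk : 3 * (x + u) < m) :
    genFrob ![m * (2 * m + 1), 2 * m + 1, 2 * m + 3] ((x + u) * (x + u + 1) + (x + u + x + 1)) =
      ((x : ℤ) + 1) * (2 * m + 1) * (2 * m + 3) - (2 * m + 1) - (2 * m + 3)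
        + (2 * u + 1) * (m * (2 * m + 1)) := by
  -- Lift `ρ + (x + u + 1) c` with `ρ = m - 3u - 1`: along it `⌊(ρ + 3j)/m⌋` is `0` for `j ≤ u`
  -- and `1` for `j > u`.
  obtain ⟨ρ, hρ⟩ : ∃ ρ, ρ + 3 * u + 1 = m := ⟨m - 3 * u - 1, by omega⟩
  have hsq : (x + u + 1) ^ 2 + (x + u + 1) * 0 = (x + u) * (x + u + 1) + (x + u) + 1 := by ring
  refine genFrob_mul_triple_eq (J := x + u + 1) (ρ := ρ) hm (coprime_two_mul_add_one_add_three m)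
    (by omega) (by omega) (by omega) ?_ ?_ ?_ ?_ fun _ => ?_
  · have hρz : (ρ : ℤ) + 3 * u + 1 = m := by exact_mod_cast hρ
    push_cast
    linear_combination (-(2 * m + 1 : ℤ)) * hρz
  · have : (0 : ℤ) ≤ x * ((2 * m + 1) * (2 * m + 3)) + (2 * u + 1) * (m * (2 * m + 1)) := by
      positivity
    nlinarith
  · calc classCount m (2 * m + 3) (x + u + 1) ρ
          ≤ (x + u + 1) ^ 2 + (x + u + 1) * 0 + (x + u + 1 - (u + 1)) :=
          classCount_le_of_div_le hm fun j hj => by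
            split_ifs <;> exact Nat.le_of_lt_succ (Nat.div_lt_of_lt_mul (by omega))
      _ = (x + u) * (x + u + 1) + (x + u + x + 1) := by omega
  · nlinarith
  · calc (x + u) * (x + u + 1) + (x + u + x + 1)
          < (x + u + 1) ^ 2 + (x + u + 1) * 0 + (x + u + 1 - u) := by omega
      _ ≤ classCount m (2 * m + 3) (x + u + 1) (ρ + 1) :=
          le_classCount_of_le_div hm fun j hj => by
            split_ifs <;> exact (Nat.le_div_iff_mul_le hm).2 (by omega)

lemma t_two_mul (m : ℕ) : t (2 * m) = m * (2 * m + 1) := by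
  rw [t, mul_assoc, Nat.mul_div_cancel_left _ two_pos]

lemma sqrt_mul_succ_add_succ {k i : ℕ} (hi : i ≤ 2 * k + 1) :
    Nat.sqrt (k * (k + 1) + i + 1) = if i < k then k else k + 1 := by
  split_ifs with hik
  · rw [show k * (k + 1) + i + 1 = k * k + (k + i + 1) by ring]
    exact Nat.sqrt_add_eq k (by omega)
  · obtain ⟨d, rfl⟩ : ∃ d, i = k + d := ⟨i - k, by omega⟩
    rw [show k * (k + 1) + (k + d) + 1 = (k + 1) * (k + 1) + d by ring]
    exact Nat.sqrt_add_eq (k + 1) (by omega)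

theorem genFrob_triangular {m k i : ℕ} (hi : i ≤ 2 * k + 1)
    (hbound : NEven (k * (k + 1) + i) < 2 * m) :
    genFrob ![t (2 * m), 2 * m + 1, 2 * m + 3] (k * (k + 1) + i) =
      ((xEvenN k i : ℤ) + 1) * (2 * m + 1) * (2 * m + 3) - (2 * m + 1) - (2 * m + 3)
        + ((yEvenN k i * t (2 * m) : ℕ) : ℤ) := by
  rw [NEven, sqrt_mul_succ_add_succ hi] at hbound
  have hm : 0 < m := by split_ifs at hbound <;> omega
  rw [t_two_mul]
  rcases le_or_gt i k with hik | hki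
  · obtain ⟨u, rfl⟩ : ∃ u, k = u + i := ⟨k - i, by omega⟩
    have hx : xEvenN (u + i) i = i := if_pos hik
    have hy : yEvenN (u + i) i = 2 * u := by rw [yEvenN, if_pos hik]; omega
    rw [hx, hy, genFrob_triangular_lower hm (by split_ifs at hbound <;> omega)
      (by split_ifs at hbound <;> omega)]
    push_cast
    ring
  · obtain ⟨x, u, rfl, rfl⟩ : ∃ x u, k = x + u ∧ i = x + u + x + 1 :=
      ⟨i - k - 1, 2 * k + 1 - i, by omega, by omega⟩
    have hx : xEvenN (x + u) (x + u + x + 1) = x := by rw [xEvenN, if_neg (by omega)]; omega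
    have hy : yEvenN (x + u) (x + u + x + 1) = 2 * u + 1 := by
      rw [yEvenN, if_neg (by omega)]; omega
    rw [hx, hy, genFrob_triangular_upper hm (by split_ifs at hbound <;> omega)]
    push_cast
    ring

/-- with `s = k(k+1) + i`, `0 ≤ i ≤ 2k+1`, for even `n > N_s^even`,
`g(t_n, n+1, n+3; s) = g(n+1, n+3; x_s^even) + y_s^even·t_n
  = (x_s^even + 1)(n+1)(n+3) - (n+1) - (n+3) + y_s^even·t_n`. -/
theorem stmt_10 (s k i n : ℕ) (hi : i ≤ 2 * k + 1) (hs : s = k * (k + 1) + i)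
    (hn : Even n) (hbound : (n : ℤ) > NEven s) :
    genFrob ![t n, n + 1, n + 3] s =
        genFrob ![n + 1, n + 3] (xEvenN k i) + ((yEvenN k i * t n : ℕ) : ℤ) ∧
    genFrob ![t n, n + 1, n + 3] s =
        ((xEvenN k i : ℤ) + 1) * ((n : ℤ) + 1) * ((n : ℤ) + 3) - ((n : ℤ) + 1) - ((n : ℤ) + 3)
          + ((yEvenN k i * t n : ℕ) : ℤ) := by
  subst hs
  obtain ⟨m, rfl⟩ := hn.two_dvd
  have htriple := genFrob_triangular (m := m) hi (by push_cast at hbound; exact hbound)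
  have hpair := genFrob_pair (coprime_two_mul_add_one_add_three m) (by omega) (by omega)
    (xEvenN k i)
  push_cast at htriple hpair ⊢
  exact ⟨by rw [htriple, hpair], htriple⟩
end

section
/- Let s ≥ 0 be an integer. For every odd integer n with n > N_s^odd, the generalized Frobenius number of the triple (t_n, (n+1)/2, (n+3)/2) satisfies g(t_n, (n+1)/2, (n+3)/2; s) = g((n+1)/2, (n+3)/2; x_s^odd) + y_s^odd·t_n = (x_s^odd + 1)(n+1)(n+3)/4 − (n+1)/2 − (n+3)/2 + y_s^odd·t_n. (Here (n+1)/2 = t_{n+1}/d_1 and (n+3)/2 = t_{n+2}/d_1 where d_1 = gcd(t_{n+1}, t_{n+2}) = n+2 for odd n.) -/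
/-!
Write `a = (n + 1) / 2`, so that `t n = (2a - 1) a`. The representations `M = a x₁ + (a + 1) x₂`
correspond to the integers `v = x₁ + x₂` with `v a ≤ M ≤ v (a + 1)`: an interval of `L` integers
whose least element `v₀` leaves the slack `r = v₀ (a + 1) - M ∈ [0, a]`. Reading the weight
`(2a - 1) a` as `2a - 1` copies of `a`, the representations by the triple number
`∑_{j < L} (⌊(r + j (a + 1)) / (2a - 1)⌋ + 1)`.

Always `M + a + 1 ≤ (L (a + 1) + r) a`, and both Frobenius numbers are the `M` attaining
equality for a prescribed pair `(L, r)`, so every larger `M` has a lexicographically larger pair and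
more representations. For the triple, `(L, r) = (l, a - 3y)`; when `n` is large compared with `s`,
the `j`-th summand there is at most `⌊j/2⌋ + 1`, plus `1` for the odd `j` with `⌊j/2⌋ ≥ y`, and
these bounds add up to `s` for `l = x + 2y`, where `(x, y) = (x_s^odd, y_s^odd)`.
-/

open Finset

lemma repCountZ_natCast {k : ℕ} (w : Fin k → ℕ) (M : ℕ) : repCountZ w M = repCount w M := by
  simp [repCountZ]

lemma genFrob_eq_of_repCount {k : ℕ} {w : Fin k → ℕ} {s G : ℕ} (hG : repCount w G ≤ s)
    (hlt : ∀ M, G < M → s < repCount w M) : genFrob w s = G := by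
  refine IsGreatest.csSup_eq ⟨by simpa [repCountZ_natCast] using hG, fun m hm => ?_⟩
  by_contra! h
  have := hlt m.toNat (by omega)
  rw [Set.mem_ofPred_eq, show m = (m.toNat : ℤ) by omega, repCountZ_natCast] at hm
  omega

lemma repCount_pos_of_eq_one {k : ℕ} {w : Fin k → ℕ} {j : Fin k} (hj : w j = 1) (M : ℕ) :
    0 < repCount w M := by
  refine card_pos.2 ⟨Pi.single j ⟨M, M.lt_succ_self⟩, ?_⟩
  simp [Pi.single_apply, apply_ite, hj]

lemma genFrob_zero_of_eq_one {k : ℕ} {w : Fin k → ℕ} {j : Fin k} (hj : w j = 1) :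
    genFrob w 0 = -1 := by
  refine IsGreatest.csSup_eq ⟨by simp [repCountZ], fun m hm => ?_⟩
  by_contra! h
  have := repCount_pos_of_eq_one hj m.toNat
  rw [Set.mem_ofPred_eq, show m = (m.toNat : ℤ) by omega, repCountZ_natCast] at hm
  omega

def halfSum (l : ℕ) : ℕ := ∑ j ∈ range l, (j / 2 + 1)

lemma halfSum_succ (l : ℕ) : halfSum (l + 1) = halfSum l + (l / 2 + 1) :=
  sum_range_succ _ _

lemma halfSum_mono : Monotone halfSum := fun _ _ h =>
  sum_le_sum_of_subset (range_subset_range.2 h)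

lemma halfSum_two_mul (k : ℕ) : halfSum (2 * k) = k * (k + 1) := by
  induction k with
  | zero => rfl
  | succ k ih =>
    rw [show 2 * (k + 1) = 2 * k + 1 + 1 by ring, halfSum_succ, halfSum_succ, ih]
    have : (2 * k + 1) / 2 = k := by omega
    rw [this, Nat.mul_div_cancel_left _ two_pos]
    ring

lemma halfSum_two_mul_add_one (k : ℕ) : halfSum (2 * k + 1) = (k + 1) * (k + 1) := by
  rw [halfSum_succ, halfSum_two_mul, Nat.mul_div_cancel_left _ two_pos]
  ring

def oddGe (c j : ℕ) : ℕ := if j % 2 = 1 ∧ c ≤ j / 2 then 1 else 0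

lemma sum_range_oddGe (c l : ℕ) : ∑ j ∈ range l, oddGe c j = l / 2 - c := by
  induction l with
  | zero => simp
  | succ l ih =>
    rw [sum_range_succ, ih, oddGe]
    split_ifs <;> omega

lemma NOdd_eq {s K : ℕ} (h₁ : K * (K + 1) ≤ s + 1) (h₂ : s + 1 < (K + 1) * (K + 2)) :
    NOdd s = 6 * K - 3 := by
  have hlo : 2 * K + 1 ≤ Nat.sqrt (4 * s + 5) := Nat.le_sqrt.2 (by nlinarith)
  have hhi : Nat.sqrt (4 * s + 5) < 2 * K + 3 := Nat.sqrt_lt.2 (by nlinarith)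
  rw [NOdd, show (Nat.sqrt (4 * s + 5) - 1) / 2 = K by omega]

lemma t_two_mul_add_one (c : ℕ) : t (2 * c + 1) = (2 * c + 1) * (c + 1) := by
  rw [t, show (2 * c + 1) * (2 * c + 1 + 1) = (2 * c + 1) * (c + 1) * 2 by ring,
    Nat.mul_div_cancel _ two_pos]

section Pair

variable {a : ℕ}

-- `vMin`, `vCount` and `vSlack` are the `v₀`, `L` and `r` of the header.
def vMin (a M : ℕ) : ℕ := (M + a) / (a + 1)

def vCount (a M : ℕ) : ℕ := M / a + 1 - vMin a M

def vSlack (a M : ℕ) : ℕ := vMin a M * (a + 1) - M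

lemma le_vMin_mul (M : ℕ) : M ≤ vMin a M * (a + 1) := by
  have := Nat.lt_div_mul_add (a := M + a) (b := a + 1) (by omega)
  rw [vMin]; omega

lemma vMin_mul_le (M : ℕ) : vMin a M * (a + 1) ≤ M + a :=
  Nat.div_mul_le_self _ _

lemma vSlack_le (M : ℕ) : vSlack a M ≤ a := by
  have := vMin_mul_le (a := a) M
  rw [vSlack]; omega

lemma mem_Icc_vMin (ha : 0 < a) {M v : ℕ} :
    v ∈ Icc (vMin a M) (M / a) ↔ v * a ≤ M ∧ M ≤ v * (a + 1) := by
  rw [mem_Icc, Nat.le_div_iff_mul_le ha, vMin,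
    Nat.div_le_iff_le_mul_add_pred (by omega : 0 < a + 1)]
  have : (a + 1) * v = v * a + v := by ring
  have : v * (a + 1) = v * a + v := by ring
  omega

lemma add_succ_le_vCount_vSlack (ha : 0 < a) (M : ℕ) :
    M + (a + 1) ≤ (vCount a M * (a + 1) + vSlack a M) * a := by
  have h₁ := le_vMin_mul (a := a) M
  have h₂ := vMin_mul_le (a := a) M
  have hq := Nat.div_add_mod M a
  have hρ := Nat.mod_lt M ha
  set q := M / a
  set ρ := M % a
  have hv : vMin a M ≤ q + 1 := by
    by_contra! h
    have : (q + 2) * (a + 1) ≤ vMin a M * (a + 1) := Nat.mul_le_mul_right _ h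
    nlinarith
  have hsum : vCount a M * (a + 1) + vMin a M * (a + 1) = a * q + q + a + 1 := by
    rw [← add_mul, show vCount a M + vMin a M = q + 1 by rw [vCount]; omega]; ring
  have hkey : vCount a M * (a + 1) + vSlack a M = q + a + 1 - ρ := by
    rw [vSlack]; omega
  rw [hkey]
  have : ρ + 1 ≤ (a - ρ) * a := Nat.le_trans (by omega) (Nat.le_mul_of_pos_left a (by omega))
  have : (q + a + 1 - ρ) * a = a * q + a + (a - ρ) * a := by
    rw [show q + a + 1 - ρ = q + 1 + (a - ρ) by omega]; ring
  omega

lemma vCount_vSlack_of_add_eq {G L r : ℕ} (hr : r ≤ a)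
    (hG : G + (a + 1) = (L * (a + 1) + r) * a) : vCount a G = L ∧ vSlack a G = r := by
  have hL : 1 ≤ L * a + r := by
    by_contra! h
    have : L * a = 0 ∧ r = 0 := by omega
    nlinarith
  have hv : vMin a G = L * a + r - 1 := by
    apply Nat.div_eq_of_lt_le
    · zify [hL] at hG ⊢; nlinarith
    · zify [hL] at hG ⊢; nlinarith
  have h₂ : 2 ≤ L * (a + 1) + r := by nlinarith
  have hq : G / a = L * (a + 1) + r - 2 := by
    apply Nat.div_eq_of_lt_le
    · zify [h₂] at hG ⊢; nlinarith
    · zify [h₂] at hG ⊢; nlinarith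
  have : L * (a + 1) = L * a + L := by ring
  refine ⟨by rw [vCount, hv, hq]; omega, ?_⟩
  have : (L * a + r - 1) * (a + 1) = G + r := by
    zify [hL] at hG ⊢; nlinarith
  rw [vSlack, hv]; omega

lemma lt_or_eq_and_lt_of_add_lt {l L r₀ r : ℕ} (hr : r ≤ a)
    (h : l * (a + 1) + r₀ < L * (a + 1) + r) : l < L ∨ l = L ∧ r₀ < r := by
  rcases lt_trichotomy l L with hl | rfl | hl
  · exact .inl hl
  · exact .inr ⟨rfl, by omega⟩
  · have : (L + 1) * (a + 1) ≤ l * (a + 1) := Nat.mul_le_mul_right _ hl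
    nlinarith

lemma repCount_pair (ha : 0 < a) (M : ℕ) : repCount ![a, a + 1] M = vCount a M := by
  rw [vCount, ← Nat.card_Icc, repCount]
  refine card_bij' (fun x _ => (x 0 : ℕ) + x 1)
    (fun v hv => ![⟨v - (M - v * a), Nat.lt_succ_of_le
      ((Nat.sub_le _ _).trans ((mem_Icc.1 hv).2.trans (Nat.div_le_self _ _)))⟩,
      ⟨M - v * a, by omega⟩])
    (fun x hx => ?_) (fun v hv => ?_) (fun x hx => ?_) (fun v hv => ?_)
  · simp only [mem_filter, mem_univ, true_and, Fin.sum_univ_two, Matrix.cons_val_zero,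
      Matrix.cons_val_one] at hx
    rw [mem_Icc_vMin ha]
    constructor <;> nlinarith
  · simp only [mem_filter, mem_univ, true_and, Fin.sum_univ_two, Matrix.cons_val_zero,
      Matrix.cons_val_one]
    obtain ⟨h₁, h₂⟩ := (mem_Icc_vMin ha).1 hv
    zify [h₁, show M - v * a ≤ v by rw [mul_add_one] at h₂; omega]
    ring
  · simp only [mem_filter, mem_univ, true_and, Fin.sum_univ_two, Matrix.cons_val_zero,
      Matrix.cons_val_one] at hx
    have : ((x 0 : ℕ) + x 1) * a + x 1 = M := by linarith
    have : M - ((x 0 : ℕ) + x 1) * a = x 1 := by omega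
    ext j
    fin_cases j <;> simp [this]
  · obtain ⟨h₁, h₂⟩ := (mem_Icc_vMin ha).1 hv
    simp only [Matrix.cons_val_zero, Matrix.cons_val_one]
    rw [mul_add_one] at h₂
    omega

theorem genFrob_pair_s11 (ha : 2 ≤ a) (x : ℕ) :
    genFrob ![a, a + 1] x = ((x : ℤ) + 1) * a * (a + 1) - (2 * a + 1) := by
  have ha₀ : 0 < a := by omega
  obtain ⟨G, hG⟩ : ∃ G, G + (a + 1) = (x * (a + 1) + a) * a :=
    ⟨_, Nat.sub_add_cancel ((show a + 1 ≤ a * a by nlinarith).trans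
      (Nat.mul_le_mul_right a (Nat.le_add_left a _)))⟩
  have hGz : (G : ℤ) = ((x : ℤ) + 1) * a * (a + 1) - (2 * a + 1) := by
    have := congrArg (Nat.cast : ℕ → ℤ) hG
    push_cast at this
    linarith
  rw [← hGz]
  obtain ⟨hL, -⟩ := vCount_vSlack_of_add_eq le_rfl hG
  refine genFrob_eq_of_repCount (by rw [repCount_pair ha₀, hL]) fun M hM => ?_
  rw [repCount_pair ha₀]
  have := add_succ_le_vCount_vSlack ha₀ M
  have hs := vSlack_le (a := a) M
  have hkey : x * (a + 1) + a < vCount a M * (a + 1) + vSlack a M :=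
    Nat.lt_of_mul_lt_mul_right (a := a) (by omega)
  rcases lt_or_eq_and_lt_of_add_lt hs hkey with h | ⟨rfl, h⟩
  · exact h
  · omega

end Pair

section Triple

variable {a b : ℕ}

lemma mem_sigma_vMin (ha : 0 < a) (hb : 0 < b) {M : ℕ} {p : (_ : ℕ) × ℕ} :
    p ∈ (Icc (vMin a M) (M / a)).sigma (fun v => range ((v * (a + 1) - M) / b + 1)) ↔
      p.1 * a ≤ M ∧ M + p.2 * b ≤ p.1 * (a + 1) := by
  rw [mem_sigma, mem_Icc_vMin ha, mem_range, Nat.lt_succ_iff, Nat.le_div_iff_mul_le hb]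
  omega

-- `(x₀, x₁, x₂) ↦ ⟨b x₀ + x₁ + x₂, x₀⟩`: the weight `b a` is read as `b` copies of `a`.
lemma repCount_triple_eq_card_sigma (ha : 0 < a) (hb : 0 < b) (M : ℕ) :
    repCount ![b * a, a, a + 1] M =
      #((Icc (vMin a M) (M / a)).sigma fun v => range ((v * (a + 1) - M) / b + 1)) := by
  have hbd : ∀ {p : (_ : ℕ) × ℕ}, p.1 * a ≤ M ∧ M + p.2 * b ≤ p.1 * (a + 1) →
      p.2 ≤ p.2 * b ∧ p.2 * b + (M - p.1 * a) ≤ p.1 ∧ p.1 ≤ M := fun ⟨h₁, h₂⟩ =>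
    ⟨Nat.le_mul_of_pos_right _ hb, by rw [mul_add_one] at h₂; omega,
      (Nat.le_mul_of_pos_right _ ha).trans h₁⟩
  rw [repCount]
  refine card_bij' (fun x _ => ⟨(x 0 : ℕ) * b + x 1 + x 2, x 0⟩)
    (fun p hp => ![⟨p.2, by have := hbd ((mem_sigma_vMin ha hb).1 hp); omega⟩,
      ⟨p.1 - p.2 * b - (M - p.1 * a), by have := hbd ((mem_sigma_vMin ha hb).1 hp); omega⟩,
      ⟨M - p.1 * a, by omega⟩])
    (fun x hx => ?_) (fun p hp => ?_) (fun x hx => ?_) (fun p hp => ?_)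
  · simp only [mem_filter, mem_univ, true_and, Fin.sum_univ_three, Matrix.cons_val_zero,
      Matrix.cons_val_one, Matrix.cons_val_two, Matrix.tail_cons, Matrix.head_cons] at hx
    rw [mem_sigma_vMin ha hb]
    constructor <;> nlinarith
  · simp only [mem_filter, mem_univ, true_and, Fin.sum_univ_three, Matrix.cons_val_zero,
      Matrix.cons_val_one, Matrix.cons_val_two, Matrix.tail_cons, Matrix.head_cons]
    obtain ⟨h₁, h₂, -⟩ := hbd ((mem_sigma_vMin ha hb).1 hp)
    zify [((mem_sigma_vMin ha hb).1 hp).1, show p.2 * b ≤ p.1 by omega,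
      show M - p.1 * a ≤ p.1 - p.2 * b by omega]
    ring
  · simp only [mem_filter, mem_univ, true_and, Fin.sum_univ_three, Matrix.cons_val_zero,
      Matrix.cons_val_one, Matrix.cons_val_two, Matrix.tail_cons, Matrix.head_cons] at hx
    have : ((x 0 : ℕ) * b + x 1 + x 2) * a + x 2 = M := by linarith
    ext j
    fin_cases j <;>
      simp only [Fin.isValue, Fin.zero_eta, Fin.mk_one, Fin.reduceFinMk, Matrix.cons_val_zero,
        Matrix.cons_val_one, Matrix.cons_val] <;> omega
  · have := hbd ((mem_sigma_vMin ha hb).1 hp)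
    ext <;> simp only [Matrix.cons_val_zero, Matrix.cons_val_one, Matrix.cons_val, heq_eq_eq]
    omega

lemma repCount_triple (ha : 0 < a) (hb : 0 < b) (M : ℕ) :
    repCount ![b * a, a, a + 1] M =
      ∑ j ∈ range (vCount a M), ((vSlack a M + j * (a + 1)) / b + 1) := by
  rw [repCount_triple_eq_card_sigma ha hb, card_sigma, ← Ico_add_one_right_eq_Icc,
    sum_Ico_eq_sum_range]
  refine sum_congr rfl fun j _ => ?_
  rw [card_range, vSlack, add_mul]
  have := le_vMin_mul (a := a) M
  congr 2
  omega

lemma div_le_half_add_oddGe {r y l j : ℕ} (hb : b + 1 = 2 * a) (hr : r + 3 * y ≤ a)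
    (hla : 3 * (l / 2) ≤ a) (hE : 3 * ((l - 1) / 2) + 2 ≤ a + 3 * y) (hj : j < l) :
    (r + j * (a + 1)) / b ≤ j / 2 + oddGe y j := by
  rw [Nat.div_le_iff_le_mul_add_pred (by omega)]
  have hb₁ : b - 1 + 1 = b := by omega
  obtain ⟨m, rfl | rfl⟩ := Nat.even_or_odd' j
  · rw [oddGe, if_neg (by omega), Nat.mul_div_cancel_left _ two_pos]
    have : 3 * m + 2 ≤ a + 3 * y := by omega
    have : (b + 1) * m = 2 * a * m := by rw [hb]
    linarith
  · rw [oddGe, show (2 * m + 1) / 2 = m by omega]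
    have : 3 * m + 3 ≤ a := by omega
    have : (b + 1) * m = 2 * a * m := by rw [hb]
    split_ifs with hy
    · linarith
    · have : m + 1 ≤ y := by omega
      linarith

lemma half_add_oddGe_le_div {r c j : ℕ} (hb : b + 1 = 2 * a) (hr : a ≤ r + 3 * c + 2) :
    j / 2 + oddGe c j ≤ (r + j * (a + 1)) / b := by
  rw [Nat.le_div_iff_mul_le (by omega)]
  obtain ⟨m, rfl | rfl⟩ := Nat.even_or_odd' j
  · rw [oddGe, if_neg (by omega), Nat.mul_div_cancel_left _ two_pos]
    nlinarith
  · rw [oddGe, show (2 * m + 1) / 2 = m by omega]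
    split_ifs <;> nlinarith

lemma repCount_triple_le {l y G : ℕ} (hb : b + 1 = 2 * a) (hla : 3 * (l / 2) ≤ a)
    (hyl : 2 * y ≤ l) (hE : 3 * ((l - 1) / 2) + 2 ≤ a + 3 * y)
    (hG : G + (a + 1) = (l * (a + 1) + (a - 3 * y)) * a) :
    repCount ![b * a, a, a + 1] G ≤ halfSum l + (l / 2 - y) := by
  obtain ⟨hL, hr⟩ := vCount_vSlack_of_add_eq (Nat.sub_le a (3 * y)) hG
  rw [repCount_triple (by omega) (by omega), hL, hr, halfSum, ← sum_range_oddGe,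
    ← sum_add_distrib]
  refine sum_le_sum fun j hj => ?_
  have := div_le_half_add_oddGe hb (r := a - 3 * y) (by omega) hla hE (mem_range.1 hj)
  omega

lemma lt_repCount_triple {l y G M : ℕ} (hb : b + 1 = 2 * a) (hyl : 2 * y ≤ l)
    (hG : G + (a + 1) = (l * (a + 1) + (a - 3 * y)) * a) (hM : G < M) :
    halfSum l + (l / 2 - y) < repCount ![b * a, a, a + 1] M := by
  have ha : 0 < a := by omega
  rw [repCount_triple ha (by omega)]
  have := add_succ_le_vCount_vSlack ha M
  have hs := vSlack_le (a := a) M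
  have hkey : l * (a + 1) + (a - 3 * y) < vCount a M * (a + 1) + vSlack a M :=
    Nat.lt_of_mul_lt_mul_right (a := a) (by omega)
  rcases lt_or_eq_and_lt_of_add_lt hs hkey with hl | ⟨hl, hr⟩
  · calc halfSum l + (l / 2 - y) < halfSum (l + 1) := by rw [halfSum_succ]; omega
      _ ≤ halfSum (vCount a M) := halfSum_mono hl
      _ ≤ _ := sum_le_sum fun j _ => by
        have := half_add_oddGe_le_div hb (r := vSlack a M) (c := a) (j := j) (by omega)
        omega
  · rw [← hl]
    calc halfSum l + (l / 2 - y) < halfSum l + (l / 2 - (y - 1)) := by omega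
      _ = ∑ j ∈ range l, (j / 2 + 1 + oddGe (y - 1) j) := by
        rw [sum_add_distrib, sum_range_oddGe, halfSum]
      _ ≤ _ := sum_le_sum fun j _ => by
        have := half_add_oddGe_le_div hb (r := vSlack a M) (c := y - 1) (j := j) (by omega)
        omega

theorem genFrob_triple {l y : ℕ} (hb : b + 1 = 2 * a) (ha : 2 ≤ a) (hla : 3 * (l / 2) ≤ a)
    (hyl : 2 * y ≤ l) (hE : 3 * ((l - 1) / 2) + 2 ≤ a + 3 * y) :
    genFrob ![b * a, a, a + 1] (halfSum l + (l / 2 - y)) =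
      (l : ℤ) * a * (a + 1) + a * a - 3 * y * a - (a + 1) := by
  have hya : 3 * y ≤ a := by omega
  obtain ⟨G, hG⟩ : ∃ G, G + (a + 1) = (l * (a + 1) + (a - 3 * y)) * a := by
    refine ⟨_, Nat.sub_add_cancel ?_⟩
    rcases Nat.eq_zero_or_pos l with rfl | hl
    · obtain rfl : y = 0 := by omega
      simpa using Nat.lt_of_succ_le ha
    · exact (Nat.le_mul_of_pos_right _ (by omega)).trans
        (Nat.mul_le_mul_right a (Nat.le_add_right_of_le (Nat.le_mul_of_pos_left _ hl)))
  have hGz : (G : ℤ) = (l : ℤ) * a * (a + 1) + a * a - 3 * y * a - (a + 1) := by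
    have := congrArg (Nat.cast : ℕ → ℤ) hG
    push_cast [hya] at this
    linarith
  rw [← hGz]
  exact genFrob_eq_of_repCount (repCount_triple_le hb hla hyl hE hG)
    fun M hM => lt_repCount_triple hb hyl hG hM

end Triple

lemma three_mul_le_of_NOdd_lt {s k i a : ℕ} (hi : i ≤ 2 * k + 1) (hs : s = k * (k + 1) + i)
    (hbound : NOdd s + 1 < 2 * (a : ℤ)) : 3 * k ≤ a ∧ (i = 2 * k + 1 → 3 * k + 3 ≤ a) := by
  rcases (by omega : i ≤ 2 * k ∨ i = 2 * k + 1) with hi | rfl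
  · rw [NOdd_eq (K := k) (by nlinarith) (by nlinarith)] at hbound
    omega
  · rw [NOdd_eq (K := k + 1) (by nlinarith) (by nlinarith)] at hbound
    omega

lemma exists_halfSum_xOddN_yOddN {k i a : ℕ} (hi : i ≤ 2 * k + 1) (ha : 2 ≤ a)
    (hk : 3 * k ≤ a ∧ (i = 2 * k + 1 → 3 * k + 3 ≤ a)) :
    ∃ l, k * (k + 1) + i = halfSum l + (l / 2 - yOddN k i) ∧ xOddN k i + 2 * yOddN k i = l ∧
      3 * (l / 2) ≤ a ∧ 3 * ((l - 1) / 2) + 2 ≤ a + 3 * yOddN k i := by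
  by_cases hik : i ≤ k
  · refine ⟨2 * k, ?_⟩
    simp only [xOddN, yOddN, if_pos hik, halfSum_two_mul]
    omega
  · refine ⟨2 * k + 1, ?_⟩
    simp only [xOddN, yOddN, if_neg hik, halfSum_two_mul_add_one]
    have : (k + 1) * (k + 1) = k * (k + 1) + k + 1 := by ring
    omega

/-- with `s = k(k+1) + i`, `0 ≤ i ≤ 2k+1`, for odd `n > N_s^odd`,
`g(t_n, (n+1)/2, (n+3)/2; s) = g((n+1)/2, (n+3)/2; x_s^odd) + y_s^odd·t_n
  = (x_s^odd + 1)(n+1)(n+3)/4 - (n+1)/2 - (n+3)/2 + y_s^odd·t_n`. -/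
theorem stmt_11 (s k i n : ℕ) (hi : i ≤ 2 * k + 1) (hs : s = k * (k + 1) + i)
    (hn : Odd n) (hbound : (n : ℤ) > NOdd s) :
    genFrob ![t n, (n + 1) / 2, (n + 3) / 2] s =
        genFrob ![(n + 1) / 2, (n + 3) / 2] (xOddN k i) + ((yOddN k i * t n : ℕ) : ℤ) ∧
    genFrob ![t n, (n + 1) / 2, (n + 3) / 2] s =
        ((xOddN k i : ℤ) + 1) * (((n : ℤ) + 1) * ((n : ℤ) + 3)) / 4
          - ((n : ℤ) + 1) / 2 - ((n : ℤ) + 3) / 2 + ((yOddN k i * t n : ℕ) : ℤ) := by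
  obtain ⟨c, rfl⟩ := hn
  rw [show (2 * c + 1 + 1) / 2 = c + 1 by omega, show (2 * c + 1 + 3) / 2 = c + 1 + 1 by omega,
    t_two_mul_add_one]
  have hk := three_mul_le_of_NOdd_lt (a := c + 1) hi hs (by push_cast at hbound ⊢; omega)
  subst hs
  rcases Nat.eq_zero_or_pos c with rfl | hc
  · -- `n = 1` forces `s = 0`, where both Frobenius numbers are `-1`.
    obtain ⟨rfl, rfl⟩ : k = 0 ∧ i = 0 := by omega
    have h₃ : genFrob ![1, 1, 2] 0 = -1 := genFrob_zero_of_eq_one (j := 0) rfl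
    have h₂ : genFrob ![1, 2] 0 = -1 := genFrob_zero_of_eq_one (j := 0) rfl
    norm_num [xOddN, yOddN, h₃, h₂]
  obtain ⟨l, hs, rfl, hla, hE⟩ := exists_halfSum_xOddN_yOddN (a := c + 1) hi (by omega) hk
  rw [hs, genFrob_triple (by ring) (by omega) hla (by omega) hE, genFrob_pair_s11 (by omega)]
  push_cast
  refine ⟨by ring, ?_⟩
  rw [show (2 * (c : ℤ) + 1 + 1) / 2 = c + 1 by omega,
    show (2 * (c : ℤ) + 1 + 3) / 2 = c + 2 by omega,
    show ((xOddN k i : ℤ) + 1) * ((2 * c + 1 + 1) * (2 * c + 1 + 3)) =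
      ((xOddN k i + 1) * ((c + 1) * (c + 2))) * 4 by ring, Int.mul_ediv_cancel _ four_ne_zero]
  ring
end

section
/- For k ≥ 2, let A = (a_1, …, a_k) be a k-tuple of positive integers with gcd(a_1, …, a_k) = 1. Let ℓ = gcd(a_2, a_3, …, a_k) and write a_j = ℓ·a_j' for 2 ≤ j ≤ k. Then for every integer s ≥ 0, g(a_1, a_2, …, a_k; s) = ℓ·g(a_1, a_2', a_3', …, a_k'; s) + a_1(ℓ − 1). -/
open Finset

/-!
Because `gcd(a₁, ℓ) = 1`, every integer can be written as `ℓ m + a₁ r` with `0 ≤ r < ℓ`. A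
representation `(x₀, x)` of `ℓ m + a₁ r` by `(a₁, ℓ a')` has `a₁ x₀ ≡ a₁ r (mod ℓ)`, hence
`x₀ = r + ℓ y₀`, and `(y₀, x)` is then a representation of `m` by `(a₁, a')`; conversely. So
`d(ℓ m + a₁ r; A) = d(m; A')`, and the largest integer with at most `s` representations by `A`
is `ℓ g(A'; s) + a₁ (ℓ - 1)`, attained at `m = g(A'; s)`, `r = ℓ - 1`.
-/

open Function

theorem exists_forall_ge_exists_sum_mul_eq {k : ℕ} {b : Fin k → ℕ} (hb : univ.gcd b = 1) :
    ∃ F : ℕ, ∀ m ≥ F, ∃ y : Fin k → ℕ, ∑ j, b j * y j = m := by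
  obtain ⟨F, hF⟩ := Nat.exists_mem_closure_of_ge (Set.range b)
  have hgcd : Nat.setGcd (Set.range b) = 1 :=
    Nat.dvd_one.mp <| hb ▸ Finset.dvd_gcd fun j _ ↦ Nat.setGcd_dvd_of_mem (Set.mem_range_self j)
  refine ⟨F, fun m hm ↦ ?_⟩
  obtain ⟨y, hy⟩ := AddSubmonoid.mem_closure_range_iff_of_fintype.mp (hF m hm (hgcd ▸ one_dvd m))
  exact ⟨y, by simp [hy, mul_comm]⟩

theorem exists_eq_mul_add_mul_of_coprime {a₁ l : ℕ} (hcop : Nat.Coprime a₁ l) (hl : 0 < l)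
    (n : ℤ) : ∃ m : ℤ, ∃ r < l, n = l * m + a₁ * r := by
  have hbezout : (a₁ : ℤ) * Nat.gcdA a₁ l + l * Nat.gcdB a₁ l = 1 := by
    rw [← Nat.gcd_eq_gcd_ab, hcop, Nat.cast_one]
  have hl' : (0 : ℤ) < l := by exact_mod_cast hl
  obtain ⟨u, hu⟩ : ∃ u, u = Nat.gcdA a₁ l * n := ⟨_, rfl⟩
  have hrem := Int.emod_lt_of_pos u hl'
  have hrem₀ := Int.emod_nonneg u hl'.ne'
  refine ⟨a₁ * (u / l) + Nat.gcdB a₁ l * n, (u % l).toNat, by omega, ?_⟩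
  rw [Int.toNat_of_nonneg hrem₀]
  linear_combination (-n) * hbezout - (a₁ : ℤ) * Int.mul_ediv_add_emod u l - (a₁ : ℤ) * hu

def repSet {k : ℕ} (a : Fin k → ℕ) (n : ℤ) : Set (Fin k → ℕ) :=
  {x | ((∑ i, a i * x i : ℕ) : ℤ) = n}

section repSet

variable {k : ℕ} {a : Fin k → ℕ}

theorem le_of_mem_repSet (ha : ∀ i, 0 < a i) {n : ℤ} {x : Fin k → ℕ} (hx : x ∈ repSet a n)
    (i : Fin k) : (x i : ℤ) ≤ n := by
  rw [← hx, Nat.cast_le]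
  calc x i ≤ a i * x i := Nat.le_mul_of_pos_left _ (ha i)
    _ ≤ ∑ j, a j * x j := Finset.single_le_sum (fun j _ ↦ Nat.zero_le (a j * x j)) (mem_univ i)

theorem repSet_finite (ha : ∀ i, 0 < a i) (n : ℤ) : (repSet a n).Finite :=
  (Set.finite_Iic fun _ ↦ n.toNat).subset fun x hx i ↦ by
    show x i ≤ n.toNat
    have := le_of_mem_repSet ha hx i
    omega

theorem repCountZ_eq_ncard (ha : ∀ i, 0 < a i) (n : ℤ) : repCountZ a n = (repSet a n).ncard := by
  rcases lt_or_ge n 0 with hn | hn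
  · have : repSet a n = ∅ := Set.eq_empty_of_forall_notMem fun x hx ↦ by
      have : (0 : ℤ) ≤ _ := Nat.cast_nonneg (∑ i, a i * x i)
      rw [hx] at this
      omega
    rw [repCountZ, if_neg hn.not_ge, this, Set.ncard_empty]
  lift n to ℕ using hn
  have hval : repSet a n = (fun (x : Fin k → Fin (n + 1)) i ↦ (x i : ℕ)) ''
      ↑(univ.filter (fun x : Fin k → Fin (n + 1) ↦ ∑ i, a i * (x i : ℕ) = n)) := by
    ext y
    constructor
    · intro hy
      refine ⟨fun i ↦ ⟨y i, by have := le_of_mem_repSet ha hy i; omega⟩, ?_, rfl⟩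
      simpa [repSet] using (Nat.cast_inj (R := ℤ)).mp hy
    · rintro ⟨x, hx, rfl⟩
      simp only [coe_filter, mem_univ, true_and, Set.mem_ofPred_eq] at hx
      simp only [repSet, Set.mem_ofPred_eq, hx]
  have hinj : Injective fun (x : Fin k → Fin (n + 1)) i ↦ (x i : ℕ) :=
    fun _ _ h ↦ funext fun i ↦ Fin.ext (congrFun h i)
  rw [hval, Set.ncard_image_of_injective _ hinj, Set.ncard_coe_finset, repCountZ,
    if_pos (Nat.cast_nonneg n), Int.toNat_natCast, repCount]

end repSet

section cons

variable {k : ℕ} {a₁ : ℕ} {a a' : Fin k → ℕ}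

theorem mem_repSet_cons {n : ℤ} {x : Fin (k + 1) → ℕ} :
    x ∈ repSet (Fin.cons a₁ a) n ↔ (a₁ : ℤ) * x 0 + ∑ j, (a j : ℤ) * x j.succ = n := by
  simp [repSet, Fin.sum_univ_succ]

theorem repSet_cons_mul_add {l r : ℕ} (hcop : a₁.Coprime l) (hr : r < l)
    (haa : ∀ j, a j = l * a' j) (m : ℤ) :
    repSet (Fin.cons a₁ a) (l * m + a₁ * r) =
      (fun y ↦ Fin.cons (r + l * y 0) (Fin.tail y)) '' repSet (Fin.cons a₁ a') m := by
  have hsum : ∀ z : Fin k → ℕ, ∑ j, (a j : ℤ) * z j = l * ∑ j, (a' j : ℤ) * z j := fun z ↦ by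
    simp only [haa, Nat.cast_mul, Finset.mul_sum, mul_assoc]
  ext x
  simp only [Set.mem_image, mem_repSet_cons]
  constructor
  · intro hx
    rw [hsum] at hx
    have hmod : r ≡ x 0 [MOD l] := by
      refine Nat.ModEq.cancel_left_of_coprime (c := a₁) (Nat.coprime_comm.mp hcop) ?_
      exact Nat.modEq_iff_dvd.mpr ⟨m - ∑ j, (a' j : ℤ) * x j.succ, by push_cast; linarith⟩
    obtain ⟨q, hq⟩ : ∃ q, x 0 = r + l * q :=
      ⟨x 0 / l, by rw [← Nat.mod_eq_of_lt hr, hmod, Nat.mod_add_div]⟩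
    refine ⟨Fin.cons q (Fin.tail x), ?_, ?_⟩
    · have hl : (l : ℤ) ≠ 0 := by exact_mod_cast (Nat.zero_le r).trans_lt hr |>.ne'
      refine mul_left_cancel₀ hl ?_
      simp only [Fin.cons_zero, Fin.cons_succ, Fin.tail]
      rw [hq] at hx
      push_cast at hx
      linear_combination hx
    · simp only [Fin.cons_zero, Fin.tail_cons, ← hq, Fin.cons_self_tail]
  · rintro ⟨y, hy, rfl⟩
    simp only [Fin.cons_zero, Fin.cons_succ, Fin.tail, hsum]
    push_cast
    linear_combination (l : ℤ) * hy

theorem repCountZ_cons_mul_add {l r : ℕ} (ha₁ : 0 < a₁) (ha' : ∀ j, 0 < a' j)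
    (hcop : a₁.Coprime l) (hr : r < l) (haa : ∀ j, a j = l * a' j) (m : ℤ) :
    repCountZ (Fin.cons a₁ a) (l * m + a₁ * r) = repCountZ (Fin.cons a₁ a') m := by
  have hl : 0 < l := (Nat.zero_le r).trans_lt hr
  have hinj : Injective fun y : Fin (k + 1) → ℕ ↦
      (Fin.cons (r + l * y 0) (Fin.tail y) : Fin (k + 1) → ℕ) := by
    intro y z h
    rw [← Fin.cons_self_tail y, ← Fin.cons_self_tail z]
    have h₀ := congrFun h 0
    simp only [Fin.cons_zero, add_right_inj, mul_right_inj' hl.ne'] at h₀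
    rw [h₀, (Fin.cons_injective2 h).2]
  have hpos : ∀ (b : Fin k → ℕ), (∀ j, 0 < b j) → ∀ i, 0 < (Fin.cons a₁ b : Fin (k + 1) → ℕ) i :=
    fun b hb ↦ Fin.cases ha₁ hb
  rw [repCountZ_eq_ncard (hpos a fun j ↦ haa j ▸ Nat.mul_pos hl (ha' j)),
    repCountZ_eq_ncard (hpos a' ha'), repSet_cons_mul_add hcop hr haa,
    Set.ncard_image_of_injective _ hinj]

end cons

theorem exists_forall_lt_repCountZ_cons {k a₁ : ℕ} {b : Fin k → ℕ} (ha₁ : 0 < a₁)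
    (hb : ∀ j, 0 < b j) (hgcd : univ.gcd b = 1) (s : ℕ) :
    ∃ N : ℤ, ∀ n ≥ N, s < repCountZ (Fin.cons a₁ b) n := by
  obtain ⟨F, hF⟩ := exists_forall_ge_exists_sum_mul_eq hgcd
  refine ⟨(F + a₁ * s : ℕ), fun n hn ↦ ?_⟩
  lift n to ℕ using (Nat.cast_nonneg _).trans hn
  have hn' : F + a₁ * s ≤ n := by exact_mod_cast hn
  have hrep (j : Fin (s + 1)) : ∃ y : Fin k → ℕ, ∑ i, b i * y i + a₁ * j = n := by
    have := Nat.mul_le_mul_left a₁ j.is_le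
    obtain ⟨y, hy⟩ := hF (n - a₁ * j) (by omega)
    exact ⟨y, by omega⟩
  choose y hy using hrep
  let f : Fin (s + 1) → Fin (k + 1) → ℕ := fun j ↦ Fin.cons j (y j)
  have hf : Injective f := fun i j h ↦ Fin.ext (by simpa [f] using congrFun h 0)
  have hsub : Set.range f ⊆ repSet (Fin.cons a₁ b) n := by
    rintro _ ⟨j, rfl⟩
    rw [mem_repSet_cons]
    simp only [f, Fin.cons_zero, Fin.cons_succ]
    exact_mod_cast (add_comm _ _).trans (hy j)
  have hpos : ∀ i, 0 < (Fin.cons a₁ b : Fin (k + 1) → ℕ) i := Fin.cases ha₁ hb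
  calc s < (Set.range f).ncard := by
        rw [Set.ncard_range_of_injective hf, Nat.card_eq_fintype_card, Fintype.card_fin]
        exact Nat.lt_succ_self s
    _ ≤ (repSet (Fin.cons a₁ b) n).ncard := Set.ncard_le_ncard hsub (repSet_finite hpos n)
    _ = repCountZ (Fin.cons a₁ b) n := (repCountZ_eq_ncard hpos n).symm

theorem isGreatest_genFrob {k s : ℕ} {b : Fin k → ℕ}
    (h : ∃ N : ℤ, ∀ n ≥ N, s < repCountZ b n) :
    IsGreatest {m : ℤ | repCountZ b m ≤ s} (genFrob b s) := by
  obtain ⟨N, hN⟩ := h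
  have hbdd : BddAbove {m : ℤ | repCountZ b m ≤ s} :=
    ⟨N, fun m hm ↦ le_of_not_gt fun hmN ↦ (hN m hmN.le).not_ge hm⟩
  exact ⟨Int.csSup_mem ⟨-1, by simp [repCountZ]⟩ hbdd, fun m hm ↦ le_csSup hbdd hm⟩

/-- Beck–Kifer: for a tuple `(a₁, a₂, …, a_k)` of positive integers with
gcd `1`, with `ℓ = gcd(a₂, …, a_k)` and `a_j = ℓ a_j'`,
`g(a₁, a₂, …, a_k; s) = ℓ·g(a₁, a₂', …, a_k'; s) + a₁(ℓ - 1)`. -/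
theorem stmt_13 (k : ℕ) (hk : 1 ≤ k) (a1 : ℕ) (a : Fin k → ℕ) (ha1 : 0 < a1)
    (ha : ∀ j, 0 < a j) (hgcd : Nat.gcd a1 (Finset.univ.gcd a) = 1)
    (a' : Fin k → ℕ) (ha' : ∀ j, a j = Finset.univ.gcd a * a' j) (s : ℕ) :
    genFrob (Fin.cons a1 a) s =
      ((Finset.univ.gcd a : ℕ) : ℤ) * genFrob (Fin.cons a1 a') s
        + (a1 : ℤ) * (((Finset.univ.gcd a : ℕ) : ℤ) - 1) := by
  set l := univ.gcd a
  have hl : 0 < l := Nat.pos_of_ne_zero fun h ↦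
    (ha ⟨0, hk⟩).ne' (Finset.gcd_eq_zero_iff.mp h _ (mem_univ _))
  have ha'pos (j : Fin k) : 0 < a' j := Nat.pos_of_mul_pos_left (ha' j ▸ ha j)
  have hgcd' : univ.gcd a' = 1 := by
    refine Nat.eq_of_mul_eq_mul_left hl ?_
    calc l * univ.gcd a' = univ.gcd fun j ↦ l * a' j := by rw [Finset.gcd_mul_left, normalize_eq]
      _ = l * 1 := by rw [← funext ha', mul_one]
  have hcount (m : ℤ) {r : ℕ} (hr : r < l) :=
    repCountZ_cons_mul_add ha1 ha'pos hgcd hr ha' m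
  obtain ⟨hmem, hmax⟩ := isGreatest_genFrob (exists_forall_lt_repCountZ_cons ha1 ha'pos hgcd' s)
  refine IsGreatest.csSup_eq ⟨?_, fun n hn ↦ ?_⟩
  · rw [Set.mem_ofPred_eq, ← Nat.cast_pred hl, hcount _ (Nat.sub_lt hl one_pos)]
    exact hmem
  · obtain ⟨m, r, hr, rfl⟩ := exists_eq_mul_add_mul_of_coprime hgcd hl n
    have hm : m ≤ genFrob (Fin.cons a1 a') s := hmax (by rwa [Set.mem_ofPred_eq, ← hcount m hr])
    have hr' : (r : ℤ) ≤ l - 1 := by omega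
    gcongr
end

section
/- Let a, b be positive integers with a < b and gcd(a, b) = 1, and let s, k ≥ 0 be integers. If m is an integer with m > g(a, b; s) + k·a, then for all integers j ≥ 0 one has d(m − j·a; a, b) ≥ d(g(a, b; s) + (k − j)·a; a, b). -/
open Finset

/-! Put `G = (s + 1)ab - a - b`. If `0 ≤ c < b` and `b ∣ n - ac`, the representations of `n` are
`(c + bt, (n - ac)/b - at)` for `0 ≤ t ≤ (n - ac)/(ab)`, so `d(n) = ⌊(n - ac)/(ab)⌋ + 1` (or `0`).
This gives `d(G + ra) = s + 1 + ⌊(r - 1)/b⌋` exactly, while `c ≤ b - 1` gives the lower bound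
`d(n) ≥ ⌊(n + a + b - 1)/(ab)⌋`, which is at least `s + 1 + ⌊r/b⌋` once `n > G + ra`.
With `r = 0` this identifies `g(a, b; s) = G`; with `r = k - j` it is the theorem. -/

section TwoGenerators

variable {a b : ℕ}

lemma repCount_pair_eq_card (hb : 0 < b) (m : ℕ) :
    repCount ![a, b] m = #{x ∈ Icc (0 : ℤ) m | (a : ℤ) * x ≤ m ∧ (b : ℤ) ∣ m - a * x} := by
  have sol {v : Fin 2 → Fin (m + 1)} (hv : v ∈ univ.filter
      (fun v : Fin 2 → Fin (m + 1) => ∑ i, ![a, b] i * (v i : ℕ) = m)) :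
      a * (v 0 : ℤ) + b * (v 1 : ℤ) = m := by
    simp only [mem_filter, mem_univ, true_and, Fin.sum_univ_two] at hv
    exact_mod_cast hv
  refine card_nbij (fun v => (v 0 : ℤ)) (fun v hv => ?_) (fun v hv w hw hvw => ?_)
    (fun x hx => ?_)
  · have := sol hv
    have := (v 0).isLt
    simp only [coe_filter, Set.mem_ofPred_eq, mem_Icc]
    exact ⟨⟨by positivity, by omega⟩, by nlinarith, ⟨(v 1 : ℕ), by linarith⟩⟩
  · have hv' := sol hv
    have hw' := sol hw
    have h0 : (v 0 : ℕ) = (w 0 : ℕ) := by simpa using hvw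
    have hb1 : (b : ℤ) * (v 1 : ℕ) = b * (w 1 : ℕ) := by rw [h0] at hv'; linarith
    have h1 : (v 1 : ℕ) = (w 1 : ℕ) := by exact_mod_cast mul_left_cancel₀ (by positivity) hb1
    funext i
    fin_cases i <;> ext <;> assumption
  · simp only [coe_filter, Set.mem_ofPred_eq, mem_Icc] at hx
    obtain ⟨⟨hx0, hxm⟩, hax, y, hy⟩ := hx
    lift x to ℕ using hx0
    have hy0 : 0 ≤ y := by
      by_contra! h
      nlinarith
    lift y to ℕ using hy0
    have hym : y ≤ m := by nlinarith
    refine ⟨![⟨x, by omega⟩, ⟨y, by omega⟩], ?_, rfl⟩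
    simp only [coe_filter, Set.mem_ofPred_eq, mem_univ, true_and, Fin.sum_univ_two,
      Matrix.cons_val_zero, Matrix.cons_val_one]
    exact_mod_cast (by linarith : (a : ℤ) * x + b * y = m)

lemma repCountZ_pair_eq_card (hb : 0 < b) (n : ℤ) :
    repCountZ ![a, b] n = #{x ∈ Icc 0 n | (a : ℤ) * x ≤ n ∧ (b : ℤ) ∣ n - a * x} := by
  unfold repCountZ
  split_ifs with hn
  · lift n to ℕ using hn
    exact repCount_pair_eq_card hb n
  · rw [Icc_eq_empty (by omega), filter_empty, card_empty]

lemma exists_dvd_sub_mul (hb : 0 < b) (hab : a.Coprime b) (n : ℤ) :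
    ∃ c : ℤ, 0 ≤ c ∧ c < b ∧ (b : ℤ) ∣ n - a * c := by
  obtain ⟨u, v, huv⟩ := Nat.isCoprime_iff_coprime.mpr hab
  have hb' : (0 : ℤ) < b := by exact_mod_cast hb
  refine ⟨n * u % b, Int.emod_nonneg _ hb'.ne', Int.emod_lt_of_pos _ hb', ?_⟩
  exact ⟨n * v + a * (n * u / b), by rw [Int.emod_def]; linear_combination (-n) * huv⟩

lemma repCountZ_pair_eq_toNat (ha : 0 < a) (hb : 0 < b) (hab : a.Coprime b) {n c : ℤ}
    (hc0 : 0 ≤ c) (hcb : c < b) (hc : (b : ℤ) ∣ n - a * c) :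
    repCountZ ![a, b] n = ((n - a * c) / (a * b) + 1).toNat := by
  have ha' : (0 : ℤ) < a := by exact_mod_cast ha
  have hb' : (0 : ℤ) < b := by exact_mod_cast hb
  have hab' : (0 : ℤ) < a * b := by positivity
  rw [repCountZ_pair_eq_card hb, ← sub_zero ((n - a * c) / (a * b) + 1), ← Int.card_Icc]
  symm
  refine card_nbij (fun t => c + b * t) (fun t ht => ?_) (fun t _ t' _ h => ?_) (fun x hx => ?_)
  · simp only [coe_Icc, Set.mem_Icc, Int.le_ediv_iff_mul_le hab'] at ht
    simp only [coe_filter, Set.mem_ofPred_eq, mem_Icc]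
    have hx0 : 0 ≤ c + b * t := by nlinarith
    have hax : a * (c + b * t) ≤ n := by nlinarith
    refine ⟨⟨hx0, by nlinarith⟩, hax, ?_⟩
    rw [show n - a * (c + b * t) = n - a * c - b * (a * t) by ring]
    exact dvd_sub hc (dvd_mul_right _ _)
  · exact mul_left_cancel₀ hb'.ne' (add_left_cancel h)
  · simp only [coe_filter, Set.mem_ofPred_eq, mem_Icc] at hx
    obtain ⟨⟨hx0, -⟩, hax, hx⟩ := hx
    have hdvd : (b : ℤ) ∣ a * (x - c) := by
      rw [show a * (x - c) = (n - a * c) - (n - a * x) by ring]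
      exact dvd_sub hc hx
    obtain ⟨t, ht⟩ := (Nat.isCoprime_iff_coprime.mpr hab.symm).dvd_of_dvd_mul_left hdvd
    have ht0 : 0 ≤ t := by
      by_contra! h
      nlinarith
    refine ⟨t, ?_, show c + b * t = x by linarith⟩
    simp only [coe_Icc, Set.mem_Icc, Int.le_ediv_iff_mul_le hab']
    exact ⟨ht0, by nlinarith⟩

lemma Int.ediv_le_ediv_of_dvd_of_lt_add {b d X Y : ℤ} (hd : 0 < d) (hbd : b ∣ d)
    (hX : b ∣ X) (hY : Y < X + b) : Y / d ≤ X / d := by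
  rw [Int.le_ediv_iff_mul_le hd]
  obtain ⟨u, hu⟩ := dvd_sub (hbd.mul_left (Y / d)) hX
  have hle : Y / d * d ≤ Y := Int.ediv_mul_le Y hd.ne'
  rcases le_or_gt b 0 with hb | hb
  · linarith
  · have : u < 1 := by nlinarith
    nlinarith

lemma ediv_le_repCountZ (ha : 0 < a) (hb : 0 < b) (hab : a.Coprime b) (n : ℤ) :
    (n + a + b - 1) / (a * b) ≤ repCountZ ![a, b] n := by
  obtain ⟨c, hc0, hcb, hc⟩ := exists_dvd_sub_mul hb hab n
  have hab' : (0 : ℤ) < a * b := by positivity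
  rw [repCountZ_pair_eq_toNat ha hb hab hc0 hcb hc]
  calc (n + a + b - 1) / (a * b)
      ≤ (n - a * c + a * b) / (a * b) :=
        Int.ediv_le_ediv_of_dvd_of_lt_add hab' (dvd_mul_left _ _)
          (dvd_add hc (dvd_mul_left _ _)) (by nlinarith)
    _ = (n - a * c) / (a * b) + 1 := by
          rw [Int.add_ediv_of_dvd_right (dvd_refl _), Int.ediv_self hab'.ne']
    _ ≤ _ := Int.self_le_toNat _

lemma repCountZ_frob_add_mul (ha : 0 < a) (hb : 0 < b) (hab : a.Coprime b) (s : ℕ) (r : ℤ) :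
    repCountZ ![a, b] ((s + 1) * (a * b) - a - b + r * a) = (s + 1 + (r - 1) / b).toNat := by
  have hb' : (0 : ℤ) < b := by exact_mod_cast hb
  have hab' : (0 : ℤ) < a * b := by positivity
  have hc : (b : ℤ) ∣ (s + 1) * (a * b) - a - b + r * a - a * ((r - 1) % b) :=
    ⟨(s + 1 + (r - 1) / b) * a - 1, by rw [Int.emod_def]; ring⟩
  rw [repCountZ_pair_eq_toNat ha hb hab (Int.emod_nonneg _ hb'.ne')
    (Int.emod_lt_of_pos _ hb') hc]
  congr 1
  rw [Int.emod_def, show (s + 1) * (a * b) - a - b + r * a - a * ((r - 1) - b * ((r - 1) / b)) =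
    (a * b - b) + (a * b) * (s + (r - 1) / b) by ring, Int.add_mul_ediv_left _ _ hab'.ne',
    Int.ediv_eq_zero_of_lt (by nlinarith) (by nlinarith)]
  ring

lemma add_ediv_le_repCountZ (ha : 0 < a) (hb : 0 < b) (hab : a.Coprime b) {s : ℕ} {r n : ℤ}
    (h : (s + 1) * (a * b) - a - b + r * a < n) : s + 1 + r / b ≤ repCountZ ![a, b] n := by
  have ha' : (0 : ℤ) < a := by exact_mod_cast ha
  have hab' : (0 : ℤ) < a * b := by positivity
  calc (s : ℤ) + 1 + r / b = (a * r + (a * b) * (s + 1)) / (a * b) := by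
        rw [Int.add_mul_ediv_left _ _ hab'.ne', Int.mul_ediv_mul_of_pos _ _ ha']; ring
    _ ≤ (n + a + b - 1) / (a * b) := Int.ediv_le_ediv hab' (by linarith)
    _ ≤ _ := ediv_le_repCountZ ha hb hab n

lemma genFrob_pair_eq (ha : 0 < a) (hb : 0 < b) (hab : a.Coprime b) (s : ℕ) :
    genFrob ![a, b] s = (s + 1) * (a * b) - a - b := by
  have hb' : (0 : ℤ) < b := by exact_mod_cast hb
  refine IsGreatest.csSup_eq ⟨?_, fun n hn => ?_⟩
  · have := repCountZ_frob_add_mul ha hb hab s 0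
    rw [zero_mul, add_zero, zero_sub, Int.neg_one_ediv, Int.sign_eq_one_of_pos hb'] at this
    simp [this]
  · by_contra! h
    have := add_ediv_le_repCountZ ha hb hab (r := 0) (by simpa using h)
    rw [Int.zero_ediv] at this
    simp only [Set.mem_ofPred_eq] at hn
    omega

end TwoGenerators

/-- for coprime `a < b` and `m > g(a,b;s) + ka`, for all `j ≥ 0`,
`d(m - ja; a, b) ≥ d(g(a,b;s) + (k-j)a; a, b)`. -/
theorem stmt_15 (a b : ℕ) (ha : 0 < a) (hlt : a < b) (hab : Nat.gcd a b = 1)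
    (s k : ℕ) (m : ℤ) (hm : m > genFrob ![a, b] s + (k : ℤ) * a) (j : ℕ) :
    repCountZ ![a, b] (m - (j : ℤ) * a) ≥
      repCountZ ![a, b] (genFrob ![a, b] s + ((k : ℤ) - (j : ℤ)) * a) := by
  have hb : 0 < b := ha.trans hlt
  rw [genFrob_pair_eq ha hb hab] at hm ⊢
  rw [ge_iff_le, repCountZ_frob_add_mul ha hb hab, Int.toNat_le]
  calc (s : ℤ) + 1 + ((k - j : ℤ) - 1) / b
      ≤ s + 1 + (k - j : ℤ) / b := by
        gcongr
        exact Int.ediv_le_ediv (by positivity) (by linarith)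
    _ ≤ _ := add_ediv_le_repCountZ ha hb hab (by linarith)
end

section
/- Let s ≥ 2 be an integer and set K_s^od = ⌊(√(4s+5) − 1)/2⌋. Let A_1, A_2, A_3 be integers greater than 1 with gcd(A_1, A_2, A_3) = 1 and A_2 dividing A_1. If 1/2 < A_2·A_3/A_1 < K_s^od/(2·K_s^od − 1), then g(A_1, A_2, A_3; s) = g(A_2, A_3; x_s^odd) + y_s^odd·A_1. -/
open Finset

/-!
Since `A₂ ∣ A₁` and `gcd(A₂, A₃) = 1`, every representation `n = A₁x₁ + A₂x₂ + A₃x₃` has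
`x₃ ≡ ρ (mod A₂)` for the unique `ρ < A₂` with `A₃ρ ≡ n (mod A₂)`. Writing `x₃ = A₂t + ρ`, the
representations of `n` correspond to the lattice points `(u, t)` with `A₁u + A₂A₃t ≤ n - A₃ρ`
(for two generators, to the `t` with `A₂A₃t ≤ n - A₃ρ`). The largest `n` with at most `s`
representations is therefore `L - A₂ + A₃(A₂ - 1)`, where `L` is the least multiple of `A₂`
such that more than `s` lattice points have weight at most `L`.

With `x = x_s^odd`, `y = y_s^odd`, `K = K_s^od` and `L = A₂A₃x + A₁y`, the bounds
`1/2 < A₂A₃/A₁ < K/(2K - 1)` say that `2vA₂A₃ < A₂A₃ + vA₁ ≤ 2vA₂A₃ + A₂A₃` for `v ≤ K`. This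
squeezes the points strictly below level `L` into a staircase whose rows have lengths
`x + 2y, x + 2y - 2, …, x, x - 1, x - 3, …`, and which has exactly `s` cells, while all of the
staircase and the extra point `(y, x)` lie at level at most `L`.
-/

section Residue

variable {b c n ρ : ℕ}

lemma exists_residue (hb : 1 < b) (hcop : Nat.Coprime b c) (n : ℕ) :
    ∃ ρ < b, c * ρ ≡ n [MOD b] := by
  obtain ⟨e, -, he⟩ := Nat.exists_mul_mod_eq_one_of_coprime hcop.symm hb
  refine ⟨e * n % b, Nat.mod_lt _ (by omega), ?_⟩
  calc c * (e * n % b) ≡ c * (e * n) [MOD b] := (Nat.mod_modEq _ _).mul_left c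
    _ = c * e * n := (mul_assoc c e n).symm
    _ ≡ 1 * n [MOD b] :=
      Nat.ModEq.mul_right n (by rw [Nat.ModEq, he, Nat.one_mod_eq_one.mpr (by omega)])
    _ = n := one_mul n

lemma mod_eq_of_mul_add_mul_eq (hcop : Nat.Coprime b c) (hρ : ρ < b) (hρn : c * ρ ≡ n [MOD b])
    {m z : ℕ} (h : b * m + c * z = n) : z % b = ρ := by
  have hz : c * z ≡ c * ρ [MOD b] :=
    calc c * z ≡ b * m + c * z [MOD b] := (Nat.mul_add_mod b m (c * z)).symm
      _ = n := h
      _ ≡ c * ρ [MOD b] := hρn.symm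
  have := Nat.ModEq.cancel_left_of_coprime hcop hz
  rwa [Nat.ModEq, Nat.mod_eq_of_lt hρ] at this

lemma exists_mul_add_eq (hρn : c * ρ ≡ n [MOD b]) {q : ℕ} (hq : b * q + c * ρ ≤ n) :
    ∃ w, b * q + c * ρ + b * w = n := by
  have : b * q + c * ρ ≡ n [MOD b] := (Nat.mul_add_mod b q (c * ρ)).trans hρn
  obtain ⟨w, hw⟩ := (Nat.modEq_iff_dvd' hq).mp this
  exact ⟨w, by omega⟩

end Residue

/-- `Φ n B` plays the role of the number of lattice points of weight at most `n - B`. -/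
theorem genFrob_eq_of_residue_count {k : ℕ} (A : Fin k → ℕ) {b c σ L N : ℕ} (hb : 1 < b)
    (hcop : Nat.Coprime b c) (Φ : ℕ → ℕ → ℕ)
    (hcount : ∀ n ρ, ρ < b → c * ρ ≡ n [MOD b] → repCount A n = Φ n (c * ρ))
    (hL : b ∣ L) (hN : N + b = L + c * (b - 1))
    (hlow : Φ N (c * (b - 1)) ≤ σ) (hhigh : ∀ n B, L + B ≤ n → σ < Φ n B) :
    genFrob A σ = N := by
  refine IsGreatest.csSup_eq ⟨?_, fun m hm => ?_⟩
  · have hres : c * (b - 1) ≡ N [MOD b] :=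
      calc c * (b - 1) = 0 + c * (b - 1) := (zero_add _).symm
        _ ≡ L + c * (b - 1) [MOD b] := ((Nat.modEq_zero_iff_dvd.mpr hL).add_right _).symm
        _ = N + b := hN.symm
        _ ≡ N [MOD b] := Nat.add_modEq_right
    show repCountZ A N ≤ σ
    rw [repCountZ, if_pos (Int.natCast_nonneg N), Int.toNat_natCast,
      hcount N (b - 1) (by omega) hres]
    exact hlow
  · by_contra! hNm
    lift m to ℕ using by omega
    obtain ⟨ρ, hρ, hρm⟩ := exists_residue hb hcop m
    have hcρ : c * ρ ≤ c * (b - 1) := Nat.mul_le_mul_left c (by omega)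
    have hres : L + c * ρ ≡ m [MOD b] :=
      calc L + c * ρ ≡ 0 + c * ρ [MOD b] := (Nat.modEq_zero_iff_dvd.mpr hL).add_right _
        _ = c * ρ := zero_add _
        _ ≡ m [MOD b] := hρm
    have hLm : L + c * ρ ≤ m := hres.le_of_lt_add (by omega)
    have := hhigh m _ hLm
    simp only [Set.mem_ofPred_eq, repCountZ, Nat.cast_nonneg, if_true, Int.toNat_natCast,
      hcount m ρ hρ hρm] at hm
    omega

section Counting

variable {a b c n ρ : ℕ}

theorem repCount_two_eq_card_s17 (hb : 0 < b) (hc : 0 < c) (hcop : Nat.Coprime b c) (hρ : ρ < b)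
    (hρn : c * ρ ≡ n [MOD b]) :
    repCount ![b, c] n = #{t ∈ range (n + 1) | b * c * t + c * ρ ≤ n} := by
  simp only [repCount, Fin.sum_univ_two, Matrix.cons_val_zero, Matrix.cons_val_one]
  have hres {x₀ x₁ : ℕ} (h : b * x₀ + c * x₁ = n) : b * (x₁ / b) + ρ = x₁ := by
    have := Nat.div_add_mod x₁ b
    rwa [mod_eq_of_mul_add_mul_eq hcop hρ hρn h] at this
  refine Finset.card_bij (fun x _ => (x 1 : ℕ) / b) ?_ ?_ ?_
  · intro x hx
    simp only [mem_filter, mem_univ, true_and] at hx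
    have hx1 := hres hx
    simp only [mem_filter, mem_range]
    refine ⟨(Nat.div_le_self _ b).trans_lt (x 1).is_lt, ?_⟩
    calc b * c * (↑(x 1) / b) + c * ρ = c * (b * (↑(x 1) / b) + ρ) := by ring
      _ ≤ n := by rw [hx1]; omega
  · intro x hx y hy hxy
    simp only [mem_filter, mem_univ, true_and] at hx hy
    have h1 : (x 1 : ℕ) = y 1 := by rw [← hres hx, ← hres hy, hxy]
    rw [h1] at hx
    have h0 : (x 0 : ℕ) = y 0 := Nat.eq_of_mul_eq_mul_left hb (by omega)
    funext j
    fin_cases j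
    exacts [Fin.ext h0, Fin.ext h1]
  · intro t ht
    simp only [mem_filter, mem_range] at ht
    obtain ⟨w, hw⟩ := exists_mul_add_eq hρn (q := c * t) (by linarith)
    replace hw : b * w + c * (b * t + ρ) = n := by rw [← hw]; ring
    have hw' : w ≤ b * w := Nat.le_mul_of_pos_left w hb
    have hx1 : b * t + ρ ≤ c * (b * t + ρ) := Nat.le_mul_of_pos_left _ hc
    refine ⟨![⟨w, by omega⟩, ⟨b * t + ρ, by omega⟩], ?_, ?_⟩
    · simp only [mem_filter, mem_univ, true_and, Matrix.cons_val_zero, Matrix.cons_val_one]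
      exact hw
    · simp [Nat.mul_add_div hb, Nat.div_eq_of_lt hρ]

theorem repCount_three_eq_card_s17 (hb : 0 < b) (hc : 0 < c) (hcop : Nat.Coprime b c) (hdvd : b ∣ a)
    (hρ : ρ < b) (hρn : c * ρ ≡ n [MOD b]) :
    repCount ![a, b, c] n =
      #{p ∈ range (n + 1) ×ˢ range (n + 1) | a * p.1 + b * c * p.2 + c * ρ ≤ n} := by
  obtain ⟨α, rfl⟩ := hdvd
  simp only [repCount, Fin.sum_univ_three, Matrix.cons_val_zero, Matrix.cons_val_one,
    Matrix.cons_val_two, Matrix.tail_cons, Matrix.head_cons]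
  have hres {x₀ x₁ x₂ : ℕ} (h : b * α * x₀ + b * x₁ + c * x₂ = n) : b * (x₂ / b) + ρ = x₂ := by
    have := Nat.div_add_mod x₂ b
    rwa [mod_eq_of_mul_add_mul_eq hcop hρ hρn (m := α * x₀ + x₁) (by rw [← h]; ring)] at this
  refine Finset.card_bij (fun x _ => ((x 0 : ℕ), (x 2 : ℕ) / b)) ?_ ?_ ?_
  · intro x hx
    simp only [mem_filter, mem_univ, true_and] at hx
    have hx2 := hres hx
    simp only [mem_filter, mem_product, mem_range]
    refine ⟨⟨(x 0).is_lt, (Nat.div_le_self _ b).trans_lt (x 2).is_lt⟩, ?_⟩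
    calc b * α * x 0 + b * c * (↑(x 2) / b) + c * ρ
        = b * α * x 0 + c * (b * (↑(x 2) / b) + ρ) := by ring
      _ ≤ n := by rw [hx2]; omega
  · intro x hx y hy hxy
    simp only [mem_filter, mem_univ, true_and] at hx hy
    simp only [Prod.mk.injEq] at hxy
    have h2 : (x 2 : ℕ) = y 2 := by rw [← hres hx, ← hres hy, hxy.2]
    rw [h2, hxy.1] at hx
    have h1 : (x 1 : ℕ) = y 1 := Nat.eq_of_mul_eq_mul_left hb (by omega)
    funext j
    fin_cases j
    exacts [Fin.ext hxy.1, Fin.ext h1, Fin.ext h2]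
  · rintro ⟨u, t⟩ hut
    simp only [mem_filter, mem_product, mem_range] at hut
    obtain ⟨⟨hu, -⟩, hle⟩ := hut
    obtain ⟨w, hw⟩ := exists_mul_add_eq hρn (q := α * u + c * t) (by linarith)
    replace hw : b * α * u + c * (b * t + ρ) + b * w = n := by rw [← hw]; ring
    have hw' : w ≤ b * w := Nat.le_mul_of_pos_left w hb
    have hx2 : b * t + ρ ≤ c * (b * t + ρ) := Nat.le_mul_of_pos_left _ hc
    refine ⟨![⟨u, hu⟩, ⟨w, by omega⟩, ⟨b * t + ρ, by omega⟩], ?_, ?_⟩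
    · simp only [mem_filter, mem_univ, true_and, Matrix.cons_val_zero, Matrix.cons_val_one,
        Matrix.cons_val_two, Matrix.tail_cons, Matrix.head_cons]
      linarith
    · simp [Nat.mul_add_div hb, Nat.div_eq_of_lt hρ]

end Counting

section TwoGenerators

variable {b c : ℕ}

lemma le_mul_pred (hb : 1 < b) (hc : 1 < c) : b ≤ c * (b - 1) := by
  have := Nat.mul_le_mul_right (b - 1) hc
  omega

theorem genFrob_two (hb : 1 < b) (hc : 1 < c) (hcop : Nat.Coprime b c) (x : ℕ) :
    genFrob ![b, c] x = (x + 1) * b * c - b - c := by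
  have hbc := le_mul_pred hb hc
  rw [genFrob_eq_of_residue_count ![b, c] hb hcop
    (fun n B => #{t ∈ range (n + 1) | b * c * t + B ≤ n})
    (fun n ρ hρ hρn => repCount_two_eq_card_s17 (by omega) (by omega) hcop hρ hρn)
    (L := b * c * x) (N := b * c * x + c * (b - 1) - b) (by simp [mul_assoc]) (by omega)]
  · rw [Nat.cast_sub (by omega)]
    push_cast [Nat.cast_pred (show 0 < b by omega)]
    ring
  · refine (card_le_card fun t ht => ?_).trans_eq (card_range x)
    simp only [mem_filter, mem_range] at ht ⊢
    exact Nat.lt_of_mul_lt_mul_left (a := b * c) (by omega)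
  · intro n B hn
    calc x < #(range (x + 1)) := by simp
      _ ≤ _ := card_le_card fun t ht => ?_
    simp only [mem_filter, mem_range] at ht ⊢
    have h1 : b * c * t ≤ b * c * x := Nat.mul_le_mul_left _ (by omega)
    have h2 : t ≤ b * c * t := Nat.le_mul_of_pos_left t (by positivity)
    omega

end TwoGenerators

/-- Rows `u > y + x / 2` are empty through the truncated subtraction. -/
def stairRow (x y u : ℕ) : ℕ := if u ≤ y then x + 2 * (y - u) else x + 1 - 2 * (u - y)

def stair (x y : ℕ) : Finset (ℕ × ℕ) :=
  {p ∈ range (y + x / 2 + 1) ×ˢ range (x + 2 * y + 1) | p.2 < stairRow x y p.1}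

section Stair

variable {x y : ℕ}

lemma mem_stair {p : ℕ × ℕ} : p ∈ stair x y ↔ p.2 < stairRow x y p.1 := by
  simp only [stair, mem_filter, mem_product, mem_range, and_iff_right_iff_imp]
  unfold stairRow
  split_ifs <;> omega

lemma sum_range_add_one_sub_two_mul {h : ℕ} (hh : 2 * h ≤ x + 1) :
    ∑ v ∈ range h, (x + 1 - 2 * (v + 1)) = h * (x - h) := by
  induction h with
  | zero => simp
  | succ h ih =>
    rw [sum_range_succ, ih (by omega)]
    zify [(by omega : h ≤ x), (by omega : h + 1 ≤ x), (by omega : 2 * (h + 1) ≤ x + 1)]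
    ring

lemma sum_stairRow (x y : ℕ) :
    ∑ u ∈ range (y + x / 2 + 1), stairRow x y u = (y + 1) * (x + y) + x / 2 * (x - x / 2) := by
  induction y with
  | zero =>
    rw [zero_add, sum_range_succ', ← sum_range_add_one_sub_two_mul (by omega)]
    simp only [stairRow, Nat.le_zero, Nat.add_one_ne_zero, ↓reduceIte, Nat.sub_zero]
    ring
  | succ y ih =>
    have hshift (u : ℕ) : stairRow x (y + 1) (u + 1) = stairRow x y u := by
      unfold stairRow; split_ifs <;> omega
    rw [show y + 1 + x / 2 + 1 = y + x / 2 + 1 + 1 by ring, sum_range_succ']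
    simp only [hshift, ih]
    simp only [stairRow, if_pos (Nat.zero_le _), Nat.sub_zero]
    ring

lemma card_stair (x y : ℕ) : #(stair x y) = (y + 1) * (x + y) + x / 2 * (x - x / 2) := by
  rw [← sum_stairRow, stair, card_filter, sum_product]
  refine sum_congr rfl fun u _ => ?_
  rw [← card_filter]
  convert card_range (stairRow x y u) using 2
  ext t
  simp only [stairRow, mem_filter, mem_range]
  split_ifs <;> omega

end Stair

section StairLattice

variable {a c x y u t : ℕ}

lemma lt_stairRow_of_add_le (hac : a ≤ 2 * c) (hend : c * x < (x / 2 + 1) * a)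
    (hstep : ∀ v ≤ (x + 1) / 2, 2 * v * c < c + v * a) {d : ℕ} (hd : 0 < d)
    (h : a * u + c * t + d ≤ c * x + y * a) : t < stairRow x y u := by
  unfold stairRow
  split_ifs with hu
  · obtain ⟨w, rfl⟩ : ∃ w, y = u + w := ⟨y - u, by omega⟩
    have : w * a ≤ w * (2 * c) := Nat.mul_le_mul_left w hac
    rw [Nat.add_sub_cancel_left]
    exact Nat.lt_of_mul_lt_mul_left (a := c) (by nlinarith)
  · obtain ⟨v, rfl⟩ : ∃ v, u = y + v + 1 := ⟨u - y - 1, by omega⟩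
    by_cases hv : v + 1 ≤ (x + 1) / 2
    · have := hstep (v + 1) hv
      have := Nat.lt_of_mul_lt_mul_left (a := c) (b := t + 2 * (v + 1)) (c := x + 1) (by nlinarith)
      omega
    · have : (x / 2 + 1) * a ≤ (v + 1) * a := Nat.mul_le_mul_right a (by omega)
      nlinarith

lemma le_of_lt_stairRow (hac : a ≤ 2 * c) (hstep : ∀ w ≤ y, 2 * w * c < c + w * a)
    (h : t < stairRow x y u) : a * u + c * t ≤ c * x + y * a := by
  unfold stairRow at h
  split_ifs at h with hu
  · obtain ⟨w, rfl⟩ : ∃ w, y = u + w := ⟨y - u, by omega⟩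
    have := hstep w (by omega)
    have : c * (t + 1) ≤ c * (x + 2 * w) := Nat.mul_le_mul_left c (by omega)
    nlinarith
  · obtain ⟨v, rfl⟩ : ∃ v, u = y + v + 1 := ⟨u - y - 1, by omega⟩
    have : (v + 1) * a ≤ (v + 1) * (2 * c) := Nat.mul_le_mul_left _ hac
    have : c * (t + 2 * (v + 1)) ≤ c * x := Nat.mul_le_mul_left c (by omega)
    nlinarith

lemma mul_lt_of_two_mul_mul_lt (hca : c ≤ a)
    (h : 2 * ((x + 1) / 2) * c < c + (x + 1) / 2 * a) : c * x < (x / 2 + 1) * a := by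
  rcases Nat.even_or_odd' x with ⟨m, rfl | rfl⟩
  · rw [show (2 * m + 1) / 2 = m by omega] at h
    rw [show 2 * m / 2 = m by omega]
    nlinarith
  · rw [show (2 * m + 1 + 1) / 2 = m + 1 by omega] at h
    rw [show (2 * m + 1) / 2 = m by omega]
    nlinarith

end StairLattice

section ThreeGenerators

variable {a b c : ℕ}

theorem genFrob_three_card_stair (hb : 1 < b) (hc : 1 < c) (hcop : Nat.Coprime b c) (hdvd : b ∣ a)
    (hca : b * c ≤ a) (hac : a ≤ 2 * (b * c)) {x y : ℕ}
    (hstep : ∀ v ≤ max y ((x + 1) / 2), 2 * v * (b * c) < b * c + v * a) :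
    genFrob ![a, b, c] #(stair x y) = (x + 1) * b * c - b - c + y * a := by
  have hbc := le_mul_pred hb hc
  have hend := mul_lt_of_two_mul_mul_lt hca (hstep _ (le_max_right _ _))
  rw [genFrob_eq_of_residue_count ![a, b, c] hb hcop
    (fun n B => #{p ∈ range (n + 1) ×ˢ range (n + 1) | a * p.1 + b * c * p.2 + B ≤ n})
    (fun n ρ hρ hρn => repCount_three_eq_card_s17 (by omega) (by omega) hcop hdvd hρ hρn)
    (L := b * c * x + y * a) (N := b * c * x + y * a + c * (b - 1) - b)
    (dvd_add (by simp [mul_assoc]) (hdvd.mul_left y)) (by omega)]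
  · rw [Nat.cast_sub (by omega)]
    push_cast [Nat.cast_pred (show 0 < b by omega)]
    ring
  · refine card_le_card fun p hp => mem_stair.mpr ?_
    simp only [mem_filter, mem_product, mem_range] at hp
    exact lt_stairRow_of_add_le hac hend (fun v hv => hstep v (le_max_of_le_right hv))
      (d := b) (by omega) (by omega)
  · intro n B hn
    have hnot : (y, x) ∉ stair x y := by simp [mem_stair, stairRow]
    calc #(stair x y) < #(insert (y, x) (stair x y)) := by simp [hnot]
      _ ≤ _ := card_le_card fun p hp => ?_
    have hp' : a * p.1 + b * c * p.2 ≤ b * c * x + y * a := by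
      rcases mem_insert.mp hp with rfl | hp
      · rw [mul_comm a, add_comm]
      · exact le_of_lt_stairRow hac (fun w hw => hstep w (le_max_of_le_left hw)) (mem_stair.mp hp)
    have h1 : p.1 ≤ a * p.1 := Nat.le_mul_of_pos_left _ ((by positivity : 0 < b * c).trans_le hca)
    have h2 : p.2 ≤ b * c * p.2 := Nat.le_mul_of_pos_left _ (by positivity)
    simp only [mem_filter, mem_product, mem_range]
    omega

end ThreeGenerators

lemma two_mul_mul_lt_of_le {a c v K : ℕ} (hac : a ≤ 2 * c) (hK : 2 * K * c < c + K * a)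
    (hv : v ≤ K) : 2 * v * c < c + v * a := by
  zify at hac hK hv ⊢
  nlinarith [mul_nonneg (sub_nonneg.mpr hv) (sub_nonneg.mpr hac)]

section OddParameters

variable {k i : ℕ}

lemma card_stair_odd (hi : i ≤ 2 * k + 1) :
    #(stair (xOddN k i) (yOddN k i)) = k * (k + 1) + i := by
  rw [card_stair]
  unfold xOddN yOddN
  split_ifs with hik
  · obtain ⟨j, rfl⟩ : ∃ j, k = i + j := ⟨k - i, by omega⟩
    rw [show 2 * i / 2 = i by omega, show 2 * i - i = i by omega, show i + j - i = j by omega]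
    ring
  · obtain ⟨g, rfl⟩ : ∃ g, i = k + 1 + g := ⟨i - k - 1, by omega⟩
    obtain ⟨w, rfl⟩ : ∃ w, k = g + w := ⟨k - g, by omega⟩
    rw [show 2 * (g + w + 1 + g - (g + w)) - 1 = 2 * g + 1 by omega,
      show (2 * g + 1) / 2 = g by omega, show 2 * g + 1 - g = g + 1 by omega,
      show 2 * (g + w) + 1 - (g + w + 1 + g) = w by omega]
    ring

lemma one_le_max_odd (hk : 1 ≤ k) : 1 ≤ max (yOddN k i) ((xOddN k i + 1) / 2) := by
  unfold xOddN yOddN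
  split_ifs <;> omega

lemma max_odd_le_sqrt (hi : i ≤ 2 * k + 1) :
    max (yOddN k i) ((xOddN k i + 1) / 2) ≤ (Nat.sqrt (4 * (k * (k + 1) + i) + 5) - 1) / 2 := by
  have h1 : 2 * k + 1 ≤ Nat.sqrt (4 * (k * (k + 1) + i) + 5) := Nat.le_sqrt.mpr (by nlinarith)
  have h2 (h : i = 2 * k + 1) : 2 * k + 3 ≤ Nat.sqrt (4 * (k * (k + 1) + i) + 5) :=
    Nat.le_sqrt.mpr (by subst h; nlinarith)
  unfold xOddN yOddN
  split_ifs <;> omega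

end OddParameters

/-- for `s ≥ 2` written as `s = k(k+1) + i`, `K_s^od = ⌊(√(4s+5) - 1)/2⌋`, and
`A₁, A₂, A₃ > 1` with `gcd(A₁,A₂,A₃) = 1`, `A₂ ∣ A₁` and
`1/2 < A₂A₃/A₁ < K_s^od/(2K_s^od - 1)`, one has
`g(A₁, A₂, A₃; s) = g(A₂, A₃; x_s^odd) + y_s^odd·A₁`. -/
theorem stmt_17 (s : ℕ) (hs : 2 ≤ s) (k i : ℕ) (hi : i ≤ 2 * k + 1)
    (hdecomp : s = k * (k + 1) + i)
    (A1 A2 A3 : ℕ) (h1 : 1 < A1) (h2 : 1 < A2) (h3 : 1 < A3)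
    (hgcd : Nat.gcd A1 (Nat.gcd A2 A3) = 1) (hdvd : A2 ∣ A1)
    (hlow : (1 : ℚ) / 2 < ((A2 * A3 : ℕ) : ℚ) / (A1 : ℚ))
    (hhigh : ((A2 * A3 : ℕ) : ℚ) / (A1 : ℚ) <
      (((Nat.sqrt (4 * s + 5) - 1) / 2 : ℕ) : ℚ) /
        (2 * (((Nat.sqrt (4 * s + 5) - 1) / 2 : ℕ) : ℚ) - 1)) :
    genFrob ![A1, A2, A3] s =
      genFrob ![A2, A3] (xOddN k i) + ((yOddN k i * A1 : ℕ) : ℤ) := by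
  subst hdecomp
  set K := (Nat.sqrt (4 * (k * (k + 1) + i) + 5) - 1) / 2
  have hk : 1 ≤ k := Nat.pos_of_ne_zero (by rintro rfl; omega)
  have hK := (one_le_max_odd hk).trans (max_odd_le_sqrt hi)
  have hcop : Nat.Coprime A2 A3 :=
    Nat.dvd_one.mp (hgcd ▸ Nat.dvd_gcd ((Nat.gcd_dvd_left _ _).trans hdvd) dvd_rfl)
  have hA1 : (0 : ℚ) < A1 := Nat.cast_pos.mpr (by omega)
  have hac : A1 ≤ 2 * (A2 * A3) := by
    rw [div_lt_div_iff₀ two_pos hA1] at hlow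
    exact_mod_cast (by linarith : (A1 : ℚ) ≤ 2 * ((A2 * A3 : ℕ) : ℚ))
  have hKc : 2 * K * (A2 * A3) < A2 * A3 + K * A1 := by
    have : (1 : ℚ) ≤ K := by exact_mod_cast hK
    rw [div_lt_div_iff₀ hA1 (by linarith)] at hhigh
    push_cast at hhigh
    exact_mod_cast (by linarith : (2 * K * (A2 * A3) : ℚ) < A2 * A3 + K * A1)
  have hstep (v : ℕ) (hv : v ≤ K) := two_mul_mul_lt_of_le hac hKc hv
  have hca : A2 * A3 ≤ A1 := by have := hstep 1 hK; omega
  rw [← card_stair_odd hi, genFrob_three_card_stair h2 h3 hcop hdvd hca hac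
    (fun v hv => hstep v (hv.trans (max_odd_le_sqrt hi))), genFrob_two h2 h3 hcop]
  push_cast
  ring
end
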